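/- arXiv:math/9409217 — 6 statements merged into one kernel-verified Lean document; each statement's English description precedes it below -/
import Mathlib

section
/- The cycle prefix digraph Γ_Δ(D) is vertex-transitive: for any two vertices X and Y there is a digraph automorphism of Γ_Δ(D) mapping X to Y. -/
/-- `l` is a vertex of the cycle prefix digraph `Γ_Δ(D)`: a sequence of `D`
distinct letters from the alphabet `{1, …, Δ+1}`. -/
def IsVtx (Δ D : ℕ) (l : List ℕ) : Prop :=
  l.length = D ∧ l.Nodup ∧ ∀ x ∈ l, 1 ≤ x ∧ x ≤ Δ + 1

/-- Adjacency in `Γ_Δ(D, -r)` (for `r = 0` this is `Γ_Δ(D)` itself): arcs are the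
rotations `R_k` for `r+2 ≤ k ≤ D` (0-indexed: move the letter at index `j`,
`r+1 ≤ j ≤ D-1`, to the front) and the shifts `S_y` for letters `y` not in the
sequence. -/
def adjR (Δ D r : ℕ) (X Y : List ℕ) : Prop :=
  IsVtx Δ D X ∧ IsVtx Δ D Y ∧
    ((∃ j, r + 1 ≤ j ∧ j < D ∧ Y = X.getD j 0 :: X.eraseIdx j) ∨
     (∃ y, y ∉ X ∧ Y = y :: X.dropLast))

/-- `w` is a directed walk of length `n` from `u` to `v` in the digraph with
adjacency relation `A`. -/
def IsWalk {V : Type*} (A : V → V → Prop) (u v : V) (n : ℕ) (w : ℕ → V) : Prop :=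
  w 0 = u ∧ w n = v ∧ ∀ i < n, A (w i) (w (i + 1))

/-- Directed distance: the least length of a directed walk from `u` to `v`. -/
noncomputable def cpDist {V : Type*} (A : V → V → Prop) (u v : V) : ℕ :=
  sInf {n | ∃ w, IsWalk A u v n w}

private lemma map_eraseIdx' {α β : Type*} (f : α → β) :
    ∀ (l : List α) (j : ℕ), (l.eraseIdx j).map f = (l.map f).eraseIdx j := by
  intro l
  induction l with
  | nil => intro j; simp
  | cons a t ih =>
    intro j
    cases j with
    | zero => simp
    | succ j => simp [List.eraseIdx, ih j]

private lemma isVtx_map {Δ D : ℕ} (σ : Equiv.Perm ℕ)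
    (hS : ∀ x, 1 ≤ x ∧ x ≤ Δ + 1 → 1 ≤ σ x ∧ σ x ≤ Δ + 1)
    {l : List ℕ} (h : IsVtx Δ D l) : IsVtx Δ D (l.map σ) := by
  refine ⟨by simp [h.1], h.2.1.map σ.injective, ?_⟩
  intro x hx
  simp only [List.mem_map] at hx
  obtain ⟨y, hy, rfl⟩ := hx
  exact hS y (h.2.2 y hy)

private lemma adjR_map {Δ D : ℕ} (σ : Equiv.Perm ℕ)
    (hS : ∀ x, 1 ≤ x ∧ x ≤ Δ + 1 → 1 ≤ σ x ∧ σ x ≤ Δ + 1)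
    {a b : List ℕ} (h : adjR Δ D 0 a b) :
    adjR Δ D 0 (a.map σ) (b.map σ) := by
  obtain ⟨ha, hb, hcase⟩ := h
  refine ⟨isVtx_map σ hS ha, isVtx_map σ hS hb, ?_⟩
  rcases hcase with ⟨j, hj1, hj2, rfl⟩ | ⟨y, hy, rfl⟩
  · left
    refine ⟨j, hj1, hj2, ?_⟩
    have hjl : j < a.length := by rw [ha.1]; exact hj2
    have hjl' : j < (a.map σ).length := by simpa using hjl
    rw [List.getD_eq_getElem _ _ hjl', List.getD_eq_getElem _ _ hjl]
    simp [map_eraseIdx']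
  · right
    refine ⟨σ y, ?_, ?_⟩
    · simp only [List.mem_map]
      rintro ⟨z, hz, hzy⟩
      exact hy (σ.injective hzy ▸ hz)
    · simp [List.map_dropLast]

/-- the cycle prefix digraph is vertex-transitive. -/
theorem cpn_vertex_transitive (Δ D : ℕ) (hD : 2 ≤ D) (hΔ : D ≤ Δ)
    (X Y : {l : List ℕ // IsVtx Δ D l}) :
    ∃ φ : {l : List ℕ // IsVtx Δ D l} ≃ {l : List ℕ // IsVtx Δ D l},
      (∀ a b, adjR Δ D 0 a.1 b.1 ↔ adjR Δ D 0 (φ a).1 (φ b).1) ∧ φ X = Y := by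
  classical
  set S : Finset ℕ := Finset.Icc 1 (Δ + 1) with hSdef
  have hXS : ∀ x ∈ X.1, x ∈ S := fun x hx => Finset.mem_Icc.2 (X.2.2.2 x hx)
  have hYS : ∀ x ∈ Y.1, x ∈ S := fun x hx => Finset.mem_Icc.2 (Y.2.2.2 x hx)
  have hlen : X.1.length = Y.1.length := by rw [X.2.1, Y.2.1]
  -- equivalence between two layered subtypes and plain subtypes
  let eX : {a : {x : ℕ // x ∈ S} // a.1 ∈ X.1} ≃ {x : ℕ // x ∈ X.1} :=
    ⟨fun a => ⟨a.1.1, a.2⟩, fun x => ⟨⟨x.1, hXS _ x.2⟩, x.2⟩, fun a => rfl, fun x => rfl⟩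
  let eY : {a : {x : ℕ // x ∈ S} // a.1 ∈ Y.1} ≃ {x : ℕ // x ∈ Y.1} :=
    ⟨fun a => ⟨a.1.1, a.2⟩, fun x => ⟨⟨x.1, hYS _ x.2⟩, x.2⟩, fun a => rfl, fun x => rfl⟩
  let gX := List.Nodup.getEquiv X.1 X.2.2.1
  let gY := List.Nodup.getEquiv Y.1 Y.2.2.1
  let e : {a : {x : ℕ // x ∈ S} // a.1 ∈ X.1} ≃ {a : {x : ℕ // x ∈ S} // a.1 ∈ Y.1} :=
    eX.trans (gX.symm.trans ((finCongr hlen).trans (gY.trans eY.symm)))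
  let σα : Equiv.Perm {x : ℕ // x ∈ S} := e.extendSubtype
  let σ : Equiv.Perm ℕ := σα.extendDomain (Equiv.refl {x : ℕ // x ∈ S})
  have hσ_mem : ∀ (x : ℕ) (hx : x ∈ S), σ x = (σα ⟨x, hx⟩).1 := by
    intro x hx
    simpa using Equiv.Perm.extendDomain_apply_subtype σα (Equiv.refl {x : ℕ // x ∈ S}) hx
  have hS : ∀ x, 1 ≤ x ∧ x ≤ Δ + 1 → 1 ≤ σ x ∧ σ x ≤ Δ + 1 := by
    intro x hx
    have hxS : x ∈ S := Finset.mem_Icc.2 hx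
    rw [hσ_mem x hxS]
    exact Finset.mem_Icc.1 (σα ⟨x, hxS⟩).2
  have hS' : ∀ x, 1 ≤ x ∧ x ≤ Δ + 1 → 1 ≤ σ.symm x ∧ σ.symm x ≤ Δ + 1 := by
    intro x hx
    have hxS : x ∈ S := Finset.mem_Icc.2 hx
    have hy : σ (σα.symm ⟨x, hxS⟩).1 = x := by
      rw [hσ_mem _ (σα.symm ⟨x, hxS⟩).2]
      simp
    have : σ.symm x = (σα.symm ⟨x, hxS⟩).1 := by
      rw [Equiv.symm_apply_eq, hy]
    rw [this]
    exact Finset.mem_Icc.1 (σα.symm ⟨x, hxS⟩).2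
  have hmap : X.1.map σ = Y.1 := by
    apply List.ext_getElem (by simpa using hlen)
    intro i h1 h2
    have hiX : i < X.1.length := by simpa using h1
    rw [List.getElem_map]
    have hxS : X.1[i] ∈ S := hXS _ (List.getElem_mem hiX)
    have hxmem : X.1[i] ∈ X.1 := List.getElem_mem hiX
    rw [hσ_mem _ hxS]
    have h1' : σα ⟨X.1[i], hxS⟩ = e ⟨⟨X.1[i], hxS⟩, hxmem⟩ :=
      Equiv.extendSubtype_apply_of_mem e ⟨X.1[i], hxS⟩ hxmem
    rw [h1']
    have hgx : gX.symm ⟨X.1[i], hxmem⟩ = ⟨i, hiX⟩ := by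
      rw [Equiv.symm_apply_eq]
      exact Subtype.ext (by simp [gX, List.Nodup.getEquiv])
    show (eY.symm (gY (finCongr hlen (gX.symm (eX ⟨⟨X.1[i], hxS⟩, hxmem⟩))))).1.1 = Y.1[i]
    have : eX ⟨⟨X.1[i], hxS⟩, hxmem⟩ = ⟨X.1[i], hxmem⟩ := rfl
    rw [this, hgx]
    simp [gY, eY, List.Nodup.getEquiv, finCongr]
  refine ⟨{ toFun := fun l => ⟨l.1.map σ, isVtx_map σ hS l.2⟩
            invFun := fun l => ⟨l.1.map σ.symm, isVtx_map σ.symm hS' l.2⟩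
            left_inv := fun l => Subtype.ext (by simp [List.map_map])
            right_inv := fun l => Subtype.ext (by simp [List.map_map]) },
          ?_, Subtype.ext hmap⟩
  intro a b
  constructor
  · exact adjR_map σ hS
  · intro h
    have h2 := adjR_map σ.symm hS' h
    simpa [List.map_map] using h2
end

section
/- For r ≥ 0 and Δ ≥ D ≥ 2r+3, the digraph Γ_Δ(D,−r) is (D+r)-reachable: for any two vertices u and v (not necessarily distinct), there exists a directed walk from u to v of length exactly D+r. -/
/-!
Every step of the walk brings a letter `c` to the front: by the rotation
that moves `c` forward if `c` occurs in the current vertex, which is an arc of `Γ_Δ(D,−r)` iff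
`c` is not among its first `r + 1` letters, and by the shift `S_c` otherwise. The vertices then
behave as move-to-front lists: after writing `v_{D-1}, …, v_0` in turn one stands at `v`, so
it suffices to keep each letter out of the first `r + 1` positions until its turn.

If `u₀ ≠ v_{D-1}`, the first `r` steps rotate to the front letters from positions `≥ r + 1`
that are not among `v_{D-1-r}, …, v_{D-1}` (there are `D - r - 1 > r + 1` candidates); this
pushes `v_{D-1-s}` out of the first `r + 1 - s` positions, which is what writing
`v_{D-1}, …, v_0` in the remaining `D` steps needs.

If `u₀ = v_{D-1}`, then `u₀` has to stay and end up last. The first `r + 1` steps plant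
letters `v_j`, `j ≤ D - 3`, that are not among the first `r + 1` letters of `u` (pigeonhole,
using `D ≥ 2r + 3`), so that `u₀` moves to position `r + 1`. The remaining `D - 1` steps write
`v_{D-2}, …, v_0`: a planted letter is rotated out of the block in front of `u₀` when its turn
comes (by then it sits at position `≥ r + 1`), any other letter comes from behind `u₀` or is
shifted in, and so `u₀` is never dropped.
-/

theorem List.Nodup.exists_mem_notMem_of_length_lt {α : Type*} {l₁ l₂ : List α} (h₁ : l₁.Nodup)
    (h : l₂.length < l₁.length) : ∃ x ∈ l₁, x ∉ l₂ := by
  by_contra! hsub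
  exact (List.subperm_of_subset h₁ hsub).length_le.not_gt h

theorem List.Nodup.getElem_notMem_take {α : Type*} {l : List α} (hl : l.Nodup) {i : ℕ}
    (hi : i < l.length) : l[i] ∉ l.take i := by
  rw [List.mem_take_iff_getElem]
  rintro ⟨j, hj, hji⟩
  have := hl.getElem_inj_iff.1 hji
  omega

theorem List.Nodup.getElem_notMem_drop {α : Type*} {l : List α} (hl : l.Nodup) {i : ℕ}
    (hi : i < l.length) : l[i] ∉ l.drop (i + 1) := by
  rw [List.mem_drop_iff_getElem]
  rintro ⟨j, hj, hji⟩
  have := hl.getElem_inj_iff.1 hji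
  omega

theorem List.reverse_take_add_one {α : Type*} {l : List α} {i : ℕ} (hi : i < l.length) :
    (l.take (i + 1)).reverse = l[i] :: (l.take i).reverse := by
  rw [List.take_add_one, List.getElem?_eq_getElem hi, Option.toList_some, List.reverse_append,
    List.reverse_singleton, List.singleton_append]

section PushFront

variable {α : Type*} [DecidableEq α]

def pushFront (Y : List α) (c : α) : List α :=
  c :: if c ∈ Y then Y.erase c else Y.dropLast

theorem take_succ_pushFront {Y : List α} {c : α} {m : ℕ} (hc : c ∉ Y.take m)
    (hm : m < Y.length) : (pushFront Y c).take (m + 1) = c :: Y.take m := by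
  rw [pushFront, List.take_succ_cons]
  congr 1
  split_ifs
  · conv_lhs => rw [← List.take_append_drop m Y, List.erase_append_right _ hc]
    exact List.take_left' (by simp; omega)
  · rw [List.dropLast_eq_take, List.take_take]
    congr 1
    omega

theorem take_pushFront_of_mem {Y A B : List α} {c : α} {m : ℕ}
    (hY : Y.take m = A ++ c :: B) (hc : c ∉ A) : (pushFront Y c).take m = c :: (A ++ B) := by
  have hmem : c ∈ Y.take m := by simp [hY]
  have hlen := congrArg List.length hY
  simp only [List.length_take, List.length_append, List.length_cons] at hlen
  have hdrop : (Y.drop m).take (m - (A.length + B.length + 1)) = [] := by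
    rw [List.take_eq_nil_iff, List.drop_eq_nil_iff]; omega
  have herase : Y.erase c = A ++ B ++ Y.drop m := by
    conv_lhs => rw [← List.take_append_drop m Y]
    rw [List.erase_append_left _ hmem, hY, List.erase_append_right _ hc, List.erase_cons_head,
      List.append_assoc]
  rw [pushFront, if_pos (List.mem_of_mem_take hmem), herase, ← List.cons_append, List.take_append,
    List.take_of_length_le (by simp; omega)]
  simpa [← Nat.add_assoc] using hdrop

end PushFront

theorem IsVtx.reverse {Δ D : ℕ} {v : List ℕ} (hv : IsVtx Δ D v) : IsVtx Δ D v.reverse :=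
  ⟨by simp [hv.1], List.nodup_reverse.2 hv.2.1, fun x hx => hv.2.2 x (List.mem_reverse.1 hx)⟩

theorem isVtx_pushFront {Δ D : ℕ} {Y : List ℕ} {c : ℕ} (hY : IsVtx Δ D Y) (hD : 0 < D)
    (hc : 1 ≤ c ∧ c ≤ Δ + 1) : IsVtx Δ D (pushFront Y c) := by
  obtain ⟨hlen, hnd, hlet⟩ := hY
  have hsub : (if c ∈ Y then Y.erase c else Y.dropLast).Sublist Y := by
    split_ifs
    · exact List.erase_sublist
    · exact List.dropLast_sublist Y
  refine ⟨?_, ?_, ?_⟩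
  · rw [pushFront, List.length_cons]
    split_ifs with h
    · rw [List.length_erase_of_mem h]; omega
    · rw [List.length_dropLast]; omega
  · refine List.nodup_cons.2 ⟨?_, hnd.sublist hsub⟩
    split_ifs with h
    · exact hnd.not_mem_erase
    · exact fun h' => h (List.dropLast_subset Y h')
  · intro x hx
    rcases List.mem_cons.1 hx with rfl | hx
    · exact hc
    · exact hlet x (hsub.subset hx)

theorem adjR_pushFront {Δ D r : ℕ} {Y : List ℕ} {c : ℕ} (hY : IsVtx Δ D Y) (hD : 0 < D)
    (hc : 1 ≤ c ∧ c ≤ Δ + 1) (hcY : c ∉ Y.take (r + 1)) : adjR Δ D r Y (pushFront Y c) := by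
  refine ⟨hY, isVtx_pushFront hY hD hc, ?_⟩
  by_cases h : c ∈ Y
  · have hidx : Y.idxOf c < Y.length := List.idxOf_lt_length_of_mem h
    refine Or.inl ⟨Y.idxOf c, ?_, hY.1 ▸ hidx, ?_⟩
    · by_contra! hlt
      exact hcY ((List.mem_take_iff_idxOf_lt h).2 hlt)
    · rw [pushFront, if_pos h, List.getD_eq_getElem _ _ hidx, List.getElem_idxOf,
        List.erase_eq_eraseIdx_of_idxOf rfl]
  · exact Or.inr ⟨c, h, by rw [pushFront, if_neg h]⟩

section Walks

variable {V : Type*} {A : V → V → Prop}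

theorem isWalk_zero (A : V → V → Prop) (u : V) : IsWalk A u u 0 fun _ => u :=
  ⟨rfl, rfl, fun _ h => absurd h (Nat.not_lt_zero _)⟩

theorem IsWalk.snoc {u x y : V} {n : ℕ} {w : ℕ → V} (hw : IsWalk A u x n w) (h : A x y) :
    IsWalk A u y (n + 1) (Function.update w (n + 1) y) := by
  obtain ⟨h0, hn, hstep⟩ := hw
  refine ⟨by simpa using h0, by simp, fun i hi => ?_⟩
  rw [Function.update_of_ne (by omega), Function.update_apply]
  rcases Nat.lt_succ_iff_lt_or_eq.1 hi with hi | rfl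
  · rw [if_neg (by omega)]; exact hstep i hi
  · rw [if_pos rfl, hn]; exact h

theorem exists_walk_of_invariant (P : ℕ → V → Prop) {u x : V} {m : ℕ}
    (hux : ∃ w, IsWalk A u x m w) (hx : P 0 x) :
    ∀ n : ℕ, (∀ i < n, ∀ y, P i y → ∃ z, A y z ∧ P (i + 1) z) →
      ∃ z, P n z ∧ ∃ w, IsWalk A u z (m + n) w
  | 0, _ => ⟨x, hx, hux⟩
  | n + 1, hstep => by
    obtain ⟨y, hy, w, hw⟩ := exists_walk_of_invariant P hux hx n fun i hi => hstep i (by omega)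
    obtain ⟨z, hyz, hz⟩ := hstep n (by omega) y hy
    exact ⟨z, hz, _, IsWalk.snoc hw hyz⟩

end Walks

section FrontAvoids

variable {Δ D r : ℕ} {w : List ℕ}

-- `w` is `v.reverse` below, so `w.getD s 0` is the letter `v_{D-1-s}`.
def FrontAvoids (Δ D r : ℕ) (w : List ℕ) (i : ℕ) (Y : List ℕ) : Prop :=
  IsVtx Δ D Y ∧ ∀ s ≤ r, w.getD s 0 ∉ Y.take (i + 1 - s)

def WritingBack (Δ D r : ℕ) (w : List ℕ) (t : ℕ) (Y : List ℕ) : Prop :=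
  IsVtx Δ D Y ∧ Y.take t = (w.take t).reverse ∧
    ∀ s, t ≤ s → s ≤ r → w.getD s 0 ∉ Y.take (r + 1 + t - s)

theorem FrontAvoids.exists_adjR (hD : 2 * r + 3 ≤ D) (hw : r < w.length) {i : ℕ} (hi : i < r)
    {Y : List ℕ} (hY : FrontAvoids Δ D r w i Y) :
    ∃ Z, adjR Δ D r Y Z ∧ FrontAvoids Δ D r w (i + 1) Z := by
  obtain ⟨hYv, hY⟩ := hY
  obtain ⟨x, hxY, hxw⟩ := List.Nodup.exists_mem_notMem_of_length_lt
    (hYv.2.1.sublist (List.drop_sublist (r + 1) Y)) (l₂ := w.take (r + 1))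
    (by simp [hYv.1]; omega)
  have hxfront : x ∉ Y.take (r + 1) := fun h => List.disjoint_take_drop hYv.2.1 le_rfl h hxY
  have harc := adjR_pushFront hYv (by omega) (hYv.2.2 x (List.mem_of_mem_drop hxY)) hxfront
  refine ⟨_, harc, harc.2.1, fun s hs hmem => ?_⟩
  have hws : w.getD s 0 ≠ x := by
    rintro rfl
    rw [List.getD_eq_getElem _ _ (by omega)] at hxw
    exact hxw (List.mem_take_iff_getElem.2 ⟨s, by simp; omega, rfl⟩)
  have hm : x ∉ Y.take (i + 1 - s) :=
    fun h => hxfront ((List.take_sublist_take_left (by omega)).subset h)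
  replace hmem :=
    (List.take_sublist_take_left (by omega : i + 1 + 1 - s ≤ i + 1 - s + 1)).subset hmem
  rw [take_succ_pushFront hm (by rw [hYv.1]; omega)] at hmem
  exact hY s hs ((List.mem_cons.1 hmem).resolve_left hws)

theorem FrontAvoids.writingBack {Y : List ℕ} (h : FrontAvoids Δ D r w r Y) :
    WritingBack Δ D r w 0 Y :=
  ⟨h.1, by simp, fun s _ hs => by simpa using h.2 s hs⟩

theorem WritingBack.exists_adjR (hrD : r < D) (hw : IsVtx Δ D w) {t : ℕ} (ht : t < D)
    {Y : List ℕ} (hY : WritingBack Δ D r w t Y) :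
    ∃ Z, adjR Δ D r Y Z ∧ WritingBack Δ D r w (t + 1) Z := by
  obtain ⟨hYv, hpre, hdeep⟩ := hY
  have htw : t < w.length := by rw [hw.1]; exact ht
  have hc : w.getD t 0 = w[t] := List.getD_eq_getElem _ _ htw
  have hcpre : w.getD t 0 ∉ Y.take t := by
    rw [hpre, List.mem_reverse, hc]
    exact hw.2.1.getElem_notMem_take htw
  have hcfront : w.getD t 0 ∉ Y.take (r + 1) := by
    by_cases htr : t ≤ r
    · simpa using hdeep t le_rfl htr
    · exact fun h => hcpre ((List.take_sublist_take_left (by omega)).subset h)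
  have harc := adjR_pushFront hYv (by omega) (hw.2.2 _ (hc ▸ List.getElem_mem htw)) hcfront
  refine ⟨_, harc, harc.2.1, ?_, fun s hts hsr hmem => ?_⟩
  · rw [take_succ_pushFront hcpre (by rw [hYv.1]; exact ht), hpre, List.reverse_take_add_one htw,
      hc]
  · rw [show r + 1 + (t + 1) - s = r + 1 + t - s + 1 by omega, take_succ_pushFront
      (fun h => hcfront ((List.take_sublist_take_left (by omega)).subset h))
      (by rw [hYv.1]; omega)] at hmem
    refine hdeep s (by omega) hsr ((List.mem_cons.1 hmem).resolve_left fun he => ?_)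
    rw [hc, List.getD_eq_getElem _ _ (by rw [hw.1]; omega), hw.2.1.getElem_inj_iff] at he
    omega

theorem WritingBack.eq_reverse (hw : w.length = D) {Y : List ℕ}
    (hY : WritingBack Δ D r w D Y) : Y = w.reverse := by
  rw [← List.take_of_length_le (l := Y) hY.1.1.le, hY.2.1, List.take_of_length_le hw.le]

theorem exists_walk_of_notMem_take_one (hD : 2 * r + 3 ≤ D) {u v : List ℕ} (hu : IsVtx Δ D u)
    (hv : IsVtx Δ D v) (h : v.reverse.getD 0 0 ∉ u.take 1) :
    ∃ w, IsWalk (adjR Δ D r) u v (D + r) w := by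
  have hw := hv.reverse
  obtain ⟨Y, hY, hwalk⟩ := exists_walk_of_invariant (FrontAvoids Δ D r v.reverse)
    ⟨_, isWalk_zero _ u⟩ ⟨hu, fun s _ => by cases s with | zero => exact h | succ => simp⟩ r
    fun i hi Y hY => hY.exists_adjR hD (by rw [hw.1]; omega) hi
  obtain ⟨Z, hZ, hwalk⟩ := exists_walk_of_invariant (WritingBack Δ D r v.reverse) hwalk
    hY.writingBack D fun t ht Z hZ => hZ.exists_adjR (by omega) hw ht
  rw [hZ.eq_reverse hw.1, List.reverse_reverse, Nat.zero_add, Nat.add_comm] at hwalk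
  exact hwalk

end FrontAvoids

section Planting

variable {Δ D r : ℕ}

theorem exists_sublist_tail_notMem_take (hD : 2 * r + 3 ≤ D) {u w : List ℕ} {a : ℕ}
    (hv : IsVtx Δ D (a :: w)) (ha : a ∈ u.take (r + 1)) :
    ∃ S : List ℕ, S.Sublist w.tail ∧ S.length = r + 1 ∧ ∀ x ∈ S, x ∉ u.take (r + 1) := by
  set p : ℕ → Bool := fun x => decide (x ∈ u.take (r + 1))
  have hbad : (a :: w.tail.filter p).length ≤ r + 1 := by
    have hnd : (a :: w.tail.filter p).Nodup :=
      hv.2.1.sublist ((List.filter_sublist.trans (List.tail_sublist w)).cons_cons a)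
    have hsub : a :: w.tail.filter p ⊆ u.take (r + 1) := by
      intro x hx
      rcases List.mem_cons.1 hx with rfl | hx
      · exact ha
      · simpa [p] using List.of_mem_filter hx
    have := (List.subperm_of_subset hnd hsub).length_le
    simp only [List.length_cons, List.length_take] at this ⊢
    omega
  have hgood := List.length_eq_length_filter_add (l := w.tail) p
  have hwlen : w.length + 1 = D := by simpa using hv.1
  refine ⟨(w.tail.filter fun x => !p x).take (r + 1),
    (List.take_sublist _ _).trans List.filter_sublist, ?_, fun x hx => ?_⟩
  · simp only [List.length_cons, List.length_tail] at hbad hgood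
    simp only [List.length_take]
    omega
  · simpa [p] using List.of_mem_filter (List.mem_of_mem_take hx)

def Planting (Δ D : ℕ) (S u : List ℕ) (i : ℕ) (Y : List ℕ) : Prop :=
  IsVtx Δ D Y ∧ ∃ S₁ S₂, S = S₁ ++ S₂ ∧ S₁.length = i ∧
    Y.take (S.length + 1) = S₁.reverse ++ u.take (S.length + 1 - i)

-- With `a :: w = v.reverse`: `S₂` lists the planted letters not yet rewritten; they form the
-- block between the written prefix and `a = v_{D-1}`.
def WritingPlanted (Δ D : ℕ) (S w : List ℕ) (a t : ℕ) (Y : List ℕ) : Prop :=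
  IsVtx Δ D Y ∧ ∃ S₁ S₂, S = S₁ ++ S₂ ∧ S₁.Sublist (w.take t).tail ∧ S₂.Sublist (w.drop t) ∧
    Y.take (t + S₂.length + 1) = (w.take t).reverse ++ S₂.reverse ++ [a]

theorem Planting.exists_adjR (hD : r + 1 < D) {S u : List ℕ} (hS : S.Nodup)
    (hSr : S.length = r + 1) (hSu : ∀ x ∈ S, x ∉ u.take (r + 1))
    (hSv : ∀ x ∈ S, 1 ≤ x ∧ x ≤ Δ + 1) {i : ℕ} (hi : i < r + 1) {Y : List ℕ}
    (hY : Planting Δ D S u i Y) : ∃ Z, adjR Δ D r Y Z ∧ Planting Δ D S u (i + 1) Z := by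
  obtain ⟨hYv, S₁, S₂, rfl, hS₁, hY⟩ := hY
  obtain ⟨c, S₂, rfl⟩ : ∃ c S₂', S₂ = c :: S₂' :=
    List.exists_cons_of_length_pos (by simp at hSr; omega)
  rw [hSr] at hY
  have hcS₁ : c ∉ S₁ := fun h => (List.nodup_append.1 hS).2.2 c h c (by simp) rfl
  have hfront : Y.take (r + 1) = S₁.reverse ++ u.take (r + 1 - i) := by
    have h := congrArg (List.take (r + 1)) hY
    simp only [List.take_take, List.take_append, List.length_reverse, hS₁] at h
    rwa [min_eq_left (by omega), min_eq_left (by omega),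
      List.take_of_length_le (l := S₁.reverse) (by simp; omega)] at h
  have hc : c ∉ Y.take (r + 1) := by
    rw [hfront, List.mem_append, List.mem_reverse, not_or]
    exact ⟨hcS₁, fun h => hSu c (by simp) ((List.take_sublist_take_left (by omega)).subset h)⟩
  have harc := adjR_pushFront hYv (by omega) (hSv c (by simp)) hc
  refine ⟨_, harc, harc.2.1, S₁ ++ [c], S₂, by simp, by simp [hS₁], ?_⟩
  rw [hSr, take_succ_pushFront hc (by rw [hYv.1]; omega), hfront]
  simp [show r + 1 + 1 - (i + 1) = r + 1 - i by omega]

theorem Planting.writingPlanted {S u w : List ℕ} {a : ℕ} (hSw : S.Sublist w)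
    (ha : u.take 1 = [a]) {Y : List ℕ} (hY : Planting Δ D S u S.length Y) :
    WritingPlanted Δ D S w a 0 Y := by
  obtain ⟨hYv, S₁, S₂, rfl, hS₁, hY⟩ := hY
  obtain rfl : S₂ = [] := by simpa using hS₁
  refine ⟨hYv, [], S₁, by simp, by simp, by simpa using hSw, ?_⟩
  simpa [ha] using hY

theorem exists_adjR_writingPlanted_of_unplanted {S₁ S₂ w Y : List ℕ} {a t : ℕ}
    (hv : IsVtx Δ D (a :: w)) (htw : t < w.length) (hYv : IsVtx Δ D Y)
    (hSr : S₁.length + S₂.length = r + 1) (hS₁ : S₁.Sublist (w.take t).tail)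
    (hS₂ : S₂.Sublist (w.drop (t + 1)))
    (hY : Y.take (t + S₂.length + 1) = (w.take t).reverse ++ S₂.reverse ++ [a]) :
    ∃ Z, adjR Δ D r Y Z ∧ WritingPlanted Δ D (S₁ ++ S₂) w a (t + 1) Z := by
  have hwnd := List.nodup_cons.1 hv.2.1
  have hcY : w[t] ∉ Y.take (t + S₂.length + 1) := by
    have hca : w[t] ≠ a := fun h => hwnd.1 (h ▸ List.getElem_mem htw)
    have hcS₂ : w[t] ∉ S₂ := fun h => hwnd.2.getElem_notMem_drop htw (hS₂.subset h)
    rw [hY]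
    simp [hwnd.2.getElem_notMem_take htw, hcS₂, hca]
  have hS₁len : S₁.length ≤ t := hS₁.length_le.trans (by simp)
  have hS₂len : S₂.length ≤ w.length - (t + 1) := by simpa using hS₂.length_le
  have hwD : w.length + 1 = D := by simpa using hv.1
  have harc := adjR_pushFront hYv (by omega)
    (hv.2.2 _ (List.mem_cons_of_mem a (List.getElem_mem htw)))
    fun h => hcY ((List.take_sublist_take_left (show r + 1 ≤ t + S₂.length + 1 by omega)).subset h)
  refine ⟨_, harc, harc.2.1, S₁, S₂, rfl,
    hS₁.trans (List.take_sublist_take_left (Nat.le_succ t)).tail, hS₂, ?_⟩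
  rw [show t + 1 + S₂.length + 1 = t + S₂.length + 1 + 1 by omega,
    take_succ_pushFront hcY (by rw [hYv.1]; omega), hY, List.reverse_take_add_one htw]
  simp only [List.cons_append]

theorem exists_adjR_writingPlanted_of_planted {S₁ R w Y : List ℕ} {a t : ℕ}
    (hv : IsVtx Δ D (a :: w)) (htw : t < w.length) (hYv : IsVtx Δ D Y)
    (hSw : (S₁ ++ w[t] :: R).Sublist w.tail) (hSr : S₁.length + R.length = r)
    (hS₁ : S₁.Sublist (w.take t).tail) (hR : R.Sublist (w.drop (t + 1)))
    (hY : Y.take (t + R.length + 2) = ((w.take t).reverse ++ R.reverse) ++ w[t] :: [a]) :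
    ∃ Z, adjR Δ D r Y Z ∧ WritingPlanted Δ D (S₁ ++ w[t] :: R) w a (t + 1) Z := by
  have hwnd := (List.nodup_cons.1 hv.2.1).2
  have ht0 : 0 < t := by
    rcases Nat.eq_zero_or_pos t with rfl | h
    · exact absurd (hSw.subset (List.mem_append_right _ List.mem_cons_self))
        (by simpa [List.drop_one] using hwnd.getElem_notMem_drop htw)
    · exact h
  have hS₁len : S₁.length + 1 ≤ t := by
    have := hS₁.length_le
    simp only [List.length_tail, List.length_take] at this
    omega
  have hA : w[t] ∉ (w.take t).reverse ++ R.reverse := by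
    have hcR : w[t] ∉ R := fun h => hwnd.getElem_notMem_drop htw (hR.subset h)
    simp [hwnd.getElem_notMem_take htw, hcR]
  have hfront : Y.take (r + 1) = ((w.take t).reverse ++ R.reverse).take (r + 1) := by
    have h := congrArg (List.take (r + 1)) hY
    rwa [List.take_take, min_eq_left (by omega),
      List.take_append_of_le_length (by simp; omega)] at h
  have harc := adjR_pushFront hYv (by simpa using hv.1.symm ▸ Nat.succ_pos _)
    (hv.2.2 _ (List.mem_cons_of_mem a (List.getElem_mem htw)))
    fun h => hA (List.mem_of_mem_take (hfront ▸ h))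
  refine ⟨_, harc, harc.2.1, S₁ ++ [w[t]], R, by simp, ?_, hR, ?_⟩
  · rw [List.take_add_one, List.getElem?_eq_getElem htw, Option.toList_some,
      List.tail_append_of_ne_nil (List.ne_nil_of_length_pos (by simp; omega))]
    exact hS₁.append (List.Sublist.refl _)
  · rw [show t + 1 + R.length + 1 = t + R.length + 2 by omega, take_pushFront_of_mem hY hA,
      List.reverse_take_add_one htw]
    simp

theorem WritingPlanted.exists_adjR {S w : List ℕ} {a : ℕ} (hv : IsVtx Δ D (a :: w))
    (hSw : S.Sublist w.tail) (hSr : S.length = r + 1) {t : ℕ} (ht : t < D - 1) {Y : List ℕ}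
    (hY : WritingPlanted Δ D S w a t Y) :
    ∃ Z, adjR Δ D r Y Z ∧ WritingPlanted Δ D S w a (t + 1) Z := by
  obtain ⟨hYv, S₁, S₂, rfl, hS₁, hS₂, hY⟩ := hY
  have htw : t < w.length := by simp [IsVtx] at hv; omega
  rw [List.length_append] at hSr
  rw [List.drop_eq_getElem_cons htw] at hS₂
  rcases List.sublist_cons_iff.1 hS₂ with hS₂ | ⟨R, rfl, hR⟩
  · exact exists_adjR_writingPlanted_of_unplanted hv htw hYv hSr hS₁ hS₂ hY
  · refine exists_adjR_writingPlanted_of_planted hv htw hYv hSw (by simp at hSr; omega) hS₁ hR ?_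
    rw [show t + R.length + 2 = t + (w[t] :: R).length + 1 by simp; omega, hY]
    simp

theorem WritingPlanted.eq_reverse {S w : List ℕ} {a : ℕ} (hwD : w.length + 1 = D) {Y : List ℕ}
    (hY : WritingPlanted Δ D S w a (D - 1) Y) : Y = (a :: w).reverse := by
  subst hwD
  obtain ⟨hYv, S₁, S₂, -, -, hS₂, hY⟩ := hY
  rw [Nat.add_sub_cancel, List.drop_length, List.sublist_nil] at hS₂
  subst hS₂
  rw [← List.take_of_length_le (l := Y) hYv.1.le]
  simpa using hY

theorem exists_walk_of_mem_take_one (hD : 2 * r + 3 ≤ D) {u v : List ℕ} (hu : IsVtx Δ D u)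
    (hv : IsVtx Δ D v) (h : v.reverse.getD 0 0 ∈ u.take 1) :
    ∃ w, IsWalk (adjR Δ D r) u v (D + r) w := by
  obtain ⟨a, w, hvw⟩ := List.exists_cons_of_ne_nil (l := v.reverse)
    (List.ne_nil_of_length_pos (by simp [hv.1]; omega))
  have hv' : IsVtx Δ D (a :: w) := hvw ▸ hv.reverse
  have hwlen : w.length + 1 = D := by simpa using hv'.1
  have ha : u.take 1 = [a] := by
    rw [hvw, List.getD_cons_zero] at h
    obtain ⟨b, u', rfl⟩ :=
      List.exists_cons_of_ne_nil (List.ne_nil_of_length_pos (l := u) (by simp [hu.1]; omega))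
    simpa [eq_comm] using h
  obtain ⟨S, hSw, hSr, hSu⟩ := exists_sublist_tail_notMem_take hD hv'
    ((List.take_sublist_take_left (by omega)).subset (ha ▸ List.mem_singleton_self a))
  have hS := hv'.2.1.sublist (hSw.trans ((List.tail_sublist w).trans (List.sublist_cons_self a w)))
  obtain ⟨Y, hY, hwalk⟩ := exists_walk_of_invariant (Planting Δ D S u) ⟨_, isWalk_zero _ u⟩
    ⟨hu, [], S, rfl, rfl, by simp⟩ (r + 1) fun i hi Y hY => hY.exists_adjR (by omega) hS hSr
      hSu (fun x hx => hv'.2.2 x (List.mem_cons_of_mem a (List.tail_subset w (hSw.subset hx)))) hi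
  obtain ⟨Z, hZ, hwalk⟩ := exists_walk_of_invariant (WritingPlanted Δ D S w a) hwalk
    ((hSr ▸ hY).writingPlanted (hSw.trans (List.tail_sublist w)) ha) (D - 1)
    fun t ht Z hZ => hZ.exists_adjR hv' hSw hSr ht
  rw [hZ.eq_reverse hwlen, ← hvw, List.reverse_reverse,
    show 0 + (r + 1) + (D - 1) = D + r by omega] at hwalk
  exact hwalk

end Planting

theorem cpn_restricted_reachable_general (Δ D r : ℕ) (hD : 2 * r + 3 ≤ D)
    (u v : List ℕ) (hu : IsVtx Δ D u) (hv : IsVtx Δ D v) :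
    ∃ w, IsWalk (adjR Δ D r) u v (D + r) w := by
  by_cases h : v.reverse.getD 0 0 ∈ u.take 1
  · exact exists_walk_of_mem_take_one hD hu hv h
  · exact exists_walk_of_notMem_take_one hD hu hv h

/-- for any `r ≥ 0` and `Δ ≥ D ≥ 2r+3`, the digraph is
`(D+r)`-reachable: any ordered pair of vertices is joined by a directed walk of
length exactly `D + r`. -/
theorem cpn_restricted_reachable (Δ D r : ℕ) (hD : 2 * r + 3 ≤ D) (hΔ : D ≤ Δ)
    (u v : List ℕ) (hu : IsVtx Δ D u) (hv : IsVtx Δ D v) :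
    ∃ w, IsWalk (adjR Δ D r) u v (D + r) w :=
  cpn_restricted_reachable_general Δ D r hD u v hu hv
end

section
/- For Δ ≥ D ≥ 3, the cycle prefix digraph Γ_Δ(D) is D-reachable: between any two (not necessarily distinct) vertices there is a directed walk of length exactly D. -/
/-! Bringing a letter to the front of a vertex (by a rotation if it occurs, by a shift otherwise)
is an arc unless the letter is already in front. Prepending the letters of `v` from last to first
therefore keeps a growing suffix of `v` as a prefix of the current vertex, and reaches `v` in
`D - k` steps from any vertex that begins with the last `k ≥ 1` letters of `v`. Let `v` end in
`x y z`. If `u` does not begin with `z`, prepend `z` and continue: `1 + (D - 1)` steps. If it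
does, `z` cannot be prepended, but the three steps `x`, `y`, `x` turn `z ⋯` into `x y z ⋯`, and
`D - 3` steps remain. -/

section Walks

variable {V : Type*} {A : V → V → Prop}

lemma isWalk_one {u v : V} (h : A u v) :
    IsWalk A u v 1 (fun i => if i = 0 then u else v) := by
  refine ⟨rfl, rfl, fun i hi => ?_⟩
  obtain rfl : i = 0 := by omega
  simpa using h

lemma IsWalk.append {u x v : V} {m n : ℕ} {w₁ w₂ : ℕ → V}
    (h₁ : IsWalk A u x m w₁) (h₂ : IsWalk A x v n w₂) :
    IsWalk A u v (m + n) (fun i => if i ≤ m then w₁ i else w₂ (i - m)) := by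
  obtain ⟨h₁0, h₁m, h₁s⟩ := h₁
  obtain ⟨h₂0, h₂n, h₂s⟩ := h₂
  refine ⟨by simpa using h₁0, ?_, fun i hi => ?_⟩
  · rcases Nat.eq_zero_or_pos n with rfl | hn
    · simp only [Nat.add_zero, le_refl, if_true, h₁m]
      rw [← h₂n, h₂0]
    · simpa [show ¬ m + n ≤ m by omega] using h₂n
  · by_cases him : i < m
    · simpa [him.le, Nat.succ_le_of_lt him] using h₁s i him
    · have := h₂s (i - m) (by omega)
      rcases Nat.eq_or_lt_of_le (not_lt.1 him) with rfl | hmi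
      · simpa [h₁m, ← h₂0] using this
      · simpa [show ¬ i ≤ m by omega, show ¬ i + 1 ≤ m by omega,
          show i + 1 - m = i - m + 1 by omega] using this

lemma exists_isWalk_zero (u : V) : ∃ w, IsWalk A u u 0 w :=
  ⟨fun _ => u, rfl, rfl, fun _ h => absurd h (Nat.not_lt_zero _)⟩

lemma exists_isWalk_add {u x v : V} {m n : ℕ}
    (h₁ : ∃ w, IsWalk A u x m w) (h₂ : ∃ w, IsWalk A x v n w) :
    ∃ w, IsWalk A u v (m + n) w :=
  let ⟨_, h₁⟩ := h₁; let ⟨_, h₂⟩ := h₂; ⟨_, h₁.append h₂⟩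

lemma exists_isWalk_succ {u x v : V} {n : ℕ} (h : A u x) (hw : ∃ w, IsWalk A x v n w) :
    ∃ w, IsWalk A u v (n + 1) w := by
  simpa only [Nat.add_comm] using exists_isWalk_add ⟨_, isWalk_one h⟩ hw

end Walks

def prependLetter (s : List ℕ) (c : ℕ) : List ℕ :=
  if c ∈ s then c :: s.erase c else c :: s.dropLast

section CyclePrefix

variable {Δ D : ℕ}

lemma isVtx_prependLetter {s : List ℕ} {c : ℕ} (hs : IsVtx Δ D s) (hne : s ≠ [])
    (hc : 1 ≤ c ∧ c ≤ Δ + 1) : IsVtx Δ D (prependLetter s c) := by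
  obtain ⟨hlen, hnd, hmem⟩ := hs
  have hlen_pos : 0 < s.length := List.length_pos_iff.2 hne
  unfold prependLetter
  split_ifs with h
  · refine ⟨?_, (hnd.erase c).cons fun h' => (hnd.mem_erase_iff.1 h').1 rfl, ?_⟩
    · simp only [List.length_cons, List.length_erase_of_mem h]
      omega
    · exact List.forall_mem_cons.2 ⟨hc, fun x hx => hmem x (List.mem_of_mem_erase hx)⟩
  · have hsub := s.dropLast_sublist
    refine ⟨?_, ((hsub.nodup hnd).cons fun h' => h (hsub.subset h')), ?_⟩
    · simp only [List.length_cons, List.length_dropLast]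
      omega
    · exact List.forall_mem_cons.2 ⟨hc, fun x hx => hmem x (hsub.subset hx)⟩

lemma adjR_prependLetter {s p : List ℕ} {b c : ℕ} (hs : IsVtx Δ D s)
    (hc : 1 ≤ c ∧ c ≤ Δ + 1) (hp : b :: p <+: s) (hcb : c ≠ b) :
    adjR Δ D 0 s (prependLetter s c) := by
  refine ⟨hs, isVtx_prependLetter hs (hp.ne_nil (List.cons_ne_nil b p)) hc, ?_⟩
  unfold prependLetter
  split_ifs with h
  · obtain ⟨t, rfl⟩ := hp
    have hidx := List.idxOf_lt_length_iff.2 h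
    refine Or.inl ⟨_, ?_, hs.1 ▸ hidx, ?_⟩
    · rw [List.cons_append, List.idxOf_cons_ne _ (Ne.symm hcb)]
      omega
    · rw [List.eraseIdx_idxOf_eq_erase, List.getD_eq_getElem _ _ hidx, List.getElem_idxOf]
  · exact Or.inr ⟨c, h, rfl⟩

lemma cons_erase_prefix_prependLetter {p s : List ℕ} (c : ℕ) (hp : p <+: s)
    (h : c ∈ s ∨ p.length < s.length) :
    c :: p.erase c <+: prependLetter s c := by
  unfold prependLetter
  split_ifs with hc
  · exact List.cons_prefix_cons.2 ⟨rfl, hp.erase c⟩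
  · rw [List.erase_of_not_mem (fun h => hc (hp.subset h))]
    have hlen : p.length ≤ s.dropLast.length := by
      rw [List.length_dropLast]
      have := h.resolve_left hc
      omega
    exact List.cons_prefix_cons.2
      ⟨rfl, List.prefix_of_prefix_length_le hp s.dropLast_prefix hlen⟩

lemma exists_isWalk_of_prefix_of_suffix {v p s : List ℕ} (hv : IsVtx Δ D v)
    (hs : IsVtx Δ D s) (hp : p ≠ []) (hpv : p <:+ v) (hps : p <+: s) :
    ∃ w, IsWalk (adjR Δ D 0) s v (D - p.length) w := by
  obtain ⟨q, hqp⟩ := hpv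
  induction q using List.reverseRecOn generalizing p s with
  | nil =>
    obtain rfl : p = v := by simpa using hqp
    obtain rfl : p = s := hps.eq_of_length (hv.1.trans hs.1.symm)
    rw [hv.1, Nat.sub_self]
    exact exists_isWalk_zero p
  | append_singleton q a ih =>
    obtain ⟨b, p, rfl⟩ := List.exists_cons_of_ne_nil hp
    have hsuf : a :: b :: p <:+ v := ⟨q, by simpa using hqp⟩
    have ha : a ∉ b :: p := (List.nodup_cons.1 (hsuf.sublist.nodup hv.2.1)).1
    have hlt : (b :: p).length < D := by
      have := congrArg List.length hqp
      simp only [List.length_append, List.length_singleton, hv.1] at this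
      omega
    have hadj := adjR_prependLetter hs (hv.2.2 a (hsuf.subset List.mem_cons_self)) hps
      fun h => ha (h ▸ List.mem_cons_self)
    have hpre : a :: b :: p <+: prependLetter s a := by
      simpa only [List.erase_of_not_mem ha] using
        cons_erase_prefix_prependLetter a hps (Or.inr (hs.1 ▸ hlt))
    rw [show D - (b :: p).length = D - (a :: b :: p).length + 1 by
      simp only [List.length_cons] at hlt ⊢; omega]
    exact exists_isWalk_succ hadj (ih hadj.2.1 (List.cons_ne_nil _ _) hpre (by simpa using hqp))

lemma exists_isWalk_three_prefix {u : List ℕ} {x y z : ℕ} (hD : 3 ≤ D)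
    (hu : IsVtx Δ D u) (hzu : [z] <+: u) (hxyz : [x, y, z].Nodup)
    (hx : 1 ≤ x ∧ x ≤ Δ + 1) (hy : 1 ≤ y ∧ y ≤ Δ + 1) :
    ∃ s, IsVtx Δ D s ∧ [x, y, z] <+: s ∧ ∃ w, IsWalk (adjR Δ D 0) u s 3 w := by
  simp only [List.nodup_cons, List.mem_cons, List.not_mem_nil, or_false, not_or] at hxyz
  obtain ⟨⟨hxy, hxz⟩, hyz, -⟩ := hxyz
  have h₁ := adjR_prependLetter hu hx hzu hxz
  have hp₁ : [x, z] <+: prependLetter u x := by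
    simpa [Ne.symm hxz] using
      cons_erase_prefix_prependLetter x hzu (Or.inr (by simp [hu.1]; omega))
  have h₂ := adjR_prependLetter h₁.2.1 hy hp₁ (Ne.symm hxy)
  have hp₂ : [y, x, z] <+: prependLetter (prependLetter u x) y := by
    simpa [List.erase_cons, hxy, Ne.symm hyz] using
      cons_erase_prefix_prependLetter y hp₁ (Or.inr (by simp [h₁.2.1.1]; omega))
  have h₃ := adjR_prependLetter h₂.2.1 hx hp₂ hxy
  have hp₃ : [x, y, z] <+: prependLetter (prependLetter (prependLetter u x) y) x := by
    simpa [List.erase_cons, Ne.symm hxy] using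
      cons_erase_prefix_prependLetter x hp₂ (Or.inl (hp₂.subset (by simp)))
  exact ⟨_, h₃.2.1, hp₃, exists_isWalk_succ h₁ <| exists_isWalk_succ h₂ <|
    exists_isWalk_succ h₃ <| exists_isWalk_zero _⟩

end CyclePrefix

theorem cpn_reachable_general (Δ D : ℕ) (hD : 3 ≤ D)
    (u v : List ℕ) (hu : IsVtx Δ D u) (hv : IsVtx Δ D v) :
    ∃ w, IsWalk (adjR Δ D 0) u v D w := by
  obtain ⟨x, y, z, hxyz⟩ : ∃ x y z, [x, y, z] <:+ v := by
    have hlen : (v.drop (D - 3)).length = 3 := by simp [hv.1]; omega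
    obtain ⟨x, y, z, h⟩ := List.length_eq_three.1 hlen
    exact ⟨x, y, z, h ▸ v.drop_suffix (D - 3)⟩
  have hletter : ∀ c ∈ [x, y, z], 1 ≤ c ∧ c ≤ Δ + 1 :=
    fun c hc => hv.2.2 c (hxyz.subset hc)
  by_cases hzu : [z] <+: u
  · obtain ⟨s, hs, hps, hus⟩ := exists_isWalk_three_prefix hD hu hzu
      (hxyz.sublist.nodup hv.2.1) (hletter x (by simp)) (hletter y (by simp))
    have := exists_isWalk_add hus
      (exists_isWalk_of_prefix_of_suffix hv hs (by simp) hxyz hps)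
    rwa [show 3 + (D - [x, y, z].length) = D by simp; omega] at this
  · obtain ⟨b, t, rfl⟩ := List.exists_cons_of_ne_nil <|
      List.ne_nil_of_length_pos (show 0 < u.length by rw [hu.1]; omega)
    have hzb : z ≠ b := by rintro rfl; exact hzu (by simp)
    have h₁ := adjR_prependLetter hu (hletter z (by simp)) (List.prefix_refl _) hzb
    have hp₁ : [z] <+: prependLetter (b :: t) z :=
      cons_erase_prefix_prependLetter z List.nil_prefix (Or.inr (by simp))
    have hzv : [z] <:+ v := (List.suffix_append [x, y] [z]).trans hxyz
    have := exists_isWalk_succ h₁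
      (exists_isWalk_of_prefix_of_suffix hv h₁.2.1 (by simp) hzv hp₁)
    rwa [show D - [z].length + 1 = D by simp; omega] at this

/-- for `Δ ≥ D ≥ 3`, the cycle prefix digraph is `D`-reachable. -/
theorem cpn_reachable (Δ D : ℕ) (hD : 3 ≤ D) (hΔ : D ≤ Δ)
    (u v : List ℕ) (hu : IsVtx Δ D u) (hv : IsVtx Δ D v) :
    ∃ w, IsWalk (adjR Δ D 0) u v D w :=
  cpn_reachable_general Δ D hD u v hu hv
end

section
/- In the cycle prefix digraph Γ_Δ(D), the directed distance from a vertex X to a vertex Y equals the length of the shortest header of Y with respect to X, i.e., the minimum k such that y_{k+1}⋯y_D is a tail of Y with respect to X. -/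
/-- `y_{k+1} ⋯ y_D` (i.e. `Y.drop k`) is a tail of `Y` with respect to `X`: it
occurs as a subsequence of `X` ending at some position `m`, all of whose
preceding letters of `X` occur in `Y`. -/
def IsTail (X Y : List ℕ) (k : ℕ) : Prop :=
  ∃ m ≤ X.length, (Y.drop k).Sublist (X.take m) ∧ ∀ x ∈ X.take m, x ∈ Y

/-!
A single arc changes a vertex only near its front: a rotation moves one letter to the front and
a shift pushes a new letter in front and drops the last one. Hence if `y_{k+1} ⋯ y_D` is a tail
of `Y` with respect to the next vertex, then `y_{k+2} ⋯ y_D` is one with respect to the current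
vertex, and along a walk of length `n` from `X` to `Y` the whole of `Y`, a tail with respect to
`Y` itself, turns into the tail `y_{n+1} ⋯ y_D` with respect to `X`. Conversely, given a tail
`y_{k+2} ⋯ y_D`, bringing the letter `y_{k+1}` to the front (by the rotation that moves it if it
occurs in `X`, by the shift `S_{y_{k+1}}` otherwise) yields a vertex with respect to which
`y_{k+1} ⋯ y_D` is a tail, so a header of length `k` can be routed in at most `k` steps.
-/

open List

section Walks

variable {V : Type*} {A : V → V → Prop} {u v x : V} {n : ℕ} {w : ℕ → V}

lemma IsWalk.cons (huv : A u v) (hw : IsWalk A v x n w) :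
    IsWalk A u x (n + 1) (fun i => if i = 0 then u else w (i - 1)) := by
  obtain ⟨h0, hn, hstep⟩ := hw
  refine ⟨rfl, by simpa using hn, fun i hi => ?_⟩
  cases i with
  | zero => simpa [h0] using huv
  | succ i => simpa using hstep i (by omega)

lemma IsWalk.tail (hw : IsWalk A u v (n + 1) w) :
    A u (w 1) ∧ IsWalk A (w 1) v n (fun i => w (i + 1)) := by
  obtain ⟨h0, hn, hstep⟩ := hw
  exact ⟨h0 ▸ hstep 0 n.succ_pos, rfl, hn, fun i _ => hstep (i + 1) (by omega)⟩

lemma cpDist_le (hw : IsWalk A u v n w) : cpDist A u v ≤ n :=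
  Nat.sInf_le ⟨w, hw⟩

lemma exists_isWalk_cpDist (hw : IsWalk A u v n w) : ∃ w', IsWalk A u v (cpDist A u v) w' :=
  Nat.sInf_mem (s := {n | ∃ w, IsWalk A u v n w}) ⟨n, w, hw⟩

end Walks

namespace List

variable {α : Type*} {A B P Q r : List α} {a : α}

lemma Sublist.of_middle_of_notMem (h : r <+ A ++ a :: B) (ha : a ∉ r) : r <+ A ++ B := by
  obtain ⟨r₁, r₂, rfl, h₁, h₂⟩ := sublist_append_iff.1 h
  rcases sublist_cons_iff.1 h₂ with h₂ | ⟨s, rfl, -⟩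
  · exact h₁.append h₂
  · exact absurd (mem_append_right r₁ mem_cons_self) ha

lemma exists_prefix_middle_of_prefix_append (hQ : Q <+: A ++ B) :
    ∃ P, P <+: A ++ a :: B ∧ Q <+ P ∧ P ⊆ a :: Q := by
  rcases prefix_or_prefix_of_prefix hQ (prefix_append A B) with hQA | ⟨C, rfl⟩
  · exact ⟨Q, prefix_append_of_prefix hQA, Sublist.refl Q, subset_cons_self a Q⟩
  · refine ⟨A ++ a :: C, ?_, ((sublist_cons_self a C).append_left A), perm_middle.subset⟩
    simpa using (prefix_append_right_inj A).1 hQ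

lemma exists_prefix_append_of_prefix_middle (hP : P <+: A ++ a :: B) (hr : r <+ P) (ha : a ∉ r) :
    ∃ P', P' <+: A ++ B ∧ r <+ P' ∧ P' ⊆ P := by
  rcases prefix_or_prefix_of_prefix hP (prefix_append A (a :: B)) with hPA | ⟨C, rfl⟩
  · exact ⟨P, prefix_append_of_prefix hPA, hr, Subset.refl P⟩
  rcases prefix_cons_iff.1 ((prefix_append_right_inj A).1 hP) with rfl | ⟨t, rfl, ht⟩
  · exact ⟨A, prefix_append A B, by simpa using hr, by simp⟩
  · exact ⟨A ++ t, (prefix_append_right_inj A).2 ht, hr.of_middle_of_notMem ha,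
      append_subset.2 ⟨subset_append_left A _, fun x hx => by simp [hx]⟩⟩

lemma IsPrefix.prefix_dropLast (h : P <+: A) (hne : P ≠ A) : P <+: A.dropLast := by
  rcases eq_nil_or_concat' A with rfl | ⟨L, b, rfl⟩
  · exact absurd (prefix_nil.1 h) hne
  · rw [dropLast_concat]
    exact (prefix_concat_iff.1 h).resolve_left hne

end List

section Vertices

variable {Δ D r : ℕ} {X A B : List ℕ} {a : ℕ}

lemma IsVtx.perm {X' : List ℕ} (h : IsVtx Δ D X) (hp : X ~ X') : IsVtx Δ D X' :=
  ⟨hp.length_eq ▸ h.1, hp.nodup_iff.1 h.2.1, fun x hx => h.2.2 x (hp.mem_iff.2 hx)⟩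

lemma adjR_rotate (h : IsVtx Δ D (A ++ a :: B)) (hA : r < A.length) :
    adjR Δ D r (A ++ a :: B) (a :: (A ++ B)) := by
  refine ⟨h, h.perm perm_middle, Or.inl ⟨A.length, hA, ?_, ?_⟩⟩
  · simp [← h.1]
  · rw [getD_append_right _ _ _ _ le_rfl, eraseIdx_append_of_length_le le_rfl]
    simp

lemma adjR_shift (h : IsVtx Δ D X) (hX : X ≠ []) (ha : a ∉ X) (ha' : 1 ≤ a ∧ a ≤ Δ + 1) :
    adjR Δ D r X (a :: X.dropLast) := by
  refine ⟨h, ⟨?_, ?_, ?_⟩, Or.inr ⟨a, ha, rfl⟩⟩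
  · have := length_pos_iff.2 hX
    simp only [length_cons, length_dropLast, ← h.1]
    omega
  · exact nodup_cons.2 ⟨fun h' => ha (dropLast_subset X h'), h.2.1.sublist (dropLast_sublist X)⟩
  · simpa using ⟨ha', fun x hx => h.2.2 x (dropLast_subset X hx)⟩

lemma exists_prefix_of_adjR {x : ℕ} {L Q : List ℕ} (hadj : adjR Δ D r X (x :: L))
    (hQ : Q <+: L) : ∃ P, P <+: X ∧ Q <+ P ∧ P ⊆ x :: Q := by
  obtain ⟨hX, -, ⟨j, -, hj, hXL⟩ | ⟨y, -, hXL⟩⟩ := hadj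
  · have hjX : j < X.length := hX.1 ▸ hj
    obtain ⟨rfl, rfl⟩ := cons.inj hXL
    have hsplit : X = X.take j ++ X[j] :: X.drop (j + 1) := by
      rw [← drop_eq_getElem_cons hjX, take_append_drop]
    rw [eraseIdx_eq_take_drop_succ] at hQ
    rw [getD_eq_getElem X 0 hjX]
    have hP := exists_prefix_middle_of_prefix_append (a := X[j]) hQ
    rwa [← hsplit] at hP
  · obtain ⟨rfl, rfl⟩ := cons.inj hXL
    exact ⟨Q, hQ.trans (dropLast_prefix X), Sublist.refl Q, subset_cons_self x Q⟩

end Vertices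

section Tails

variable {X Y : List ℕ} {k : ℕ}

lemma isTail_iff_exists_prefix : IsTail X Y k ↔ ∃ P, P <+: X ∧ Y.drop k <+ P ∧ P ⊆ Y := by
  constructor
  · rintro ⟨m, -, hsub, hmem⟩
    exact ⟨X.take m, take_prefix m X, hsub, hmem⟩
  · rintro ⟨P, hP, hsub, hmem⟩
    have hlen := hP.length_le
    rw [prefix_iff_eq_take] at hP
    exact ⟨P.length, hlen, hP ▸ hsub, hP ▸ hmem⟩

lemma isTail_of_length_le (h : Y.length ≤ k) : IsTail X Y k :=
  isTail_iff_exists_prefix.2 ⟨[], nil_prefix, by simp [drop_eq_nil_of_le h], nil_subset Y⟩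

lemma isTail_self_zero (Y : List ℕ) : IsTail Y Y 0 :=
  isTail_iff_exists_prefix.2 ⟨Y, prefix_refl Y, by simp, Subset.refl Y⟩

lemma IsTail.eq_of_zero (hlen : X.length = Y.length) (h : IsTail X Y 0) : X = Y := by
  obtain ⟨P, hP, hsub, -⟩ := isTail_iff_exists_prefix.1 h
  exact (((drop_zero ▸ hsub).trans hP.sublist).eq_of_length hlen.symm).symm

lemma isTail_getElem_cons {L P : List ℕ} (hk : k < Y.length) (hP : P <+: L)
    (hr : Y.drop (k + 1) <+ P) (hPY : P ⊆ Y) : IsTail (Y[k] :: L) Y k := by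
  refine isTail_iff_exists_prefix.2
    ⟨Y[k] :: P, cons_prefix_cons.2 ⟨rfl, hP⟩, ?_, cons_subset.2 ⟨getElem_mem hk, hPY⟩⟩
  rw [drop_eq_getElem_cons hk]
  exact hr.cons_cons _

lemma IsTail.of_adjR {Δ D r : ℕ} {X' : List ℕ} (hadj : adjR Δ D r X X') (h : IsTail X' Y k) :
    IsTail X Y (k + 1) := by
  obtain ⟨P', hP', hsub, hP'Y⟩ := isTail_iff_exists_prefix.1 h
  obtain ⟨x, L, rfl⟩ : ∃ x L, X' = x :: L := by
    rcases hadj.2.2 with ⟨j, -, -, rfl⟩ | ⟨y, -, rfl⟩ <;> exact ⟨_, _, rfl⟩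
  rcases prefix_cons_iff.1 hP' with rfl | ⟨Q, rfl, hQ⟩
  · exact isTail_of_length_le ((drop_eq_nil_iff.1 (sublist_nil.1 hsub)).trans k.le_succ)
  · obtain ⟨P, hPX, hQP, hPQ⟩ := exists_prefix_of_adjR hadj hQ
    refine isTail_iff_exists_prefix.2 ⟨P, hPX, ?_, Subset.trans hPQ hP'Y⟩
    rw [← tail_drop]
    exact hsub.tail.trans hQP

lemma isTail_of_isWalk {Δ D r n : ℕ} {w : ℕ → List ℕ} (hw : IsWalk (adjR Δ D r) X Y n w) :
    IsTail X Y n := by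
  induction n generalizing X w with
  | zero =>
    obtain ⟨rfl, rfl, -⟩ := hw
    exact isTail_self_zero _
  | succ n ih =>
    obtain ⟨hadj, hw'⟩ := hw.tail
    exact (ih hw').of_adjR hadj

lemma IsTail.pred_or_exists_adjR {Δ D : ℕ} (hX : IsVtx Δ D X) (hY : IsVtx Δ D Y)
    (h : IsTail X Y (k + 1)) : IsTail X Y k ∨ ∃ X', adjR Δ D 0 X X' ∧ IsTail X' Y k := by
  rcases le_or_gt Y.length k with hkY | hk
  · exact .inl (isTail_of_length_le hkY)
  obtain ⟨P, hPX, hr, hPY⟩ := isTail_iff_exists_prefix.1 h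
  have hYk : Y[k] ∉ Y.drop (k + 1) := by
    have hnd := hY.2.1.sublist (drop_sublist k Y)
    rw [drop_eq_getElem_cons hk, nodup_cons] at hnd
    exact hnd.1
  by_cases hkX : Y[k] ∈ X
  · obtain ⟨A, B, rfl⟩ := append_of_mem hkX
    obtain ⟨P', hP', hr', hP'P⟩ := exists_prefix_append_of_prefix_middle hPX hr hYk
    have ht := isTail_getElem_cons hk hP' hr' (Subset.trans hP'P hPY)
    rcases eq_or_ne A [] with rfl | hA
    · exact .inl ht
    · exact .inr ⟨_, adjR_rotate hX (length_pos_iff.2 hA), ht⟩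
  · have hXne : X ≠ [] := ne_nil_of_length_pos (hX.1 ▸ hY.1 ▸ (Nat.zero_le k).trans_lt hk)
    -- `P = X` would make `X` a permutation of `Y`, which does not contain `Y[k]`.
    have hPX' : P <+: X.dropLast := hPX.prefix_dropLast fun hPX_eq => hkX <| by
      subst P
      exact ((subperm_of_subset hX.2.1 hPY).perm_of_length_le (by rw [hX.1, hY.1])).mem_iff.2
        (getElem_mem hk)
    exact .inr ⟨_, adjR_shift hX hXne hkX (hY.2.2 _ (getElem_mem hk)),
      isTail_getElem_cons hk hPX' hr hPY⟩

lemma IsTail.exists_isWalk {Δ D : ℕ} (hY : IsVtx Δ D Y) (hX : IsVtx Δ D X) (h : IsTail X Y k) :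
    ∃ n ≤ k, ∃ w, IsWalk (adjR Δ D 0) X Y n w := by
  induction k generalizing X with
  | zero => exact ⟨0, le_rfl, fun _ => X, rfl, h.eq_of_zero (by rw [hX.1, hY.1]), by simp⟩
  | succ k ih =>
    rcases h.pred_or_exists_adjR hX hY with h' | ⟨X', hadj, h'⟩
    · obtain ⟨n, hn, w, hw⟩ := ih hX h'
      exact ⟨n, by omega, w, hw⟩
    · obtain ⟨n, hn, w, hw⟩ := ih hadj.2.1 h'
      exact ⟨n + 1, by omega, _, hw.cons hadj⟩

end Tails

theorem dist_eq_shortest_header_general (Δ D : ℕ)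
    (X Y : List ℕ) (hX : IsVtx Δ D X) (hY : IsVtx Δ D Y) :
    cpDist (adjR Δ D 0) X Y = sInf {k | IsTail X Y k} := by
  have hheader : IsTail X Y (sInf {k | IsTail X Y k}) :=
    Nat.sInf_mem (s := {k | IsTail X Y k}) ⟨D, isTail_of_length_le hY.1.le⟩
  obtain ⟨n, hn, w, hw⟩ := hheader.exists_isWalk hY hX
  obtain ⟨w', hw'⟩ := exists_isWalk_cpDist hw
  exact le_antisymm ((cpDist_le hw).trans hn) (Nat.sInf_le (isTail_of_isWalk hw'))

/-- in `Γ_Δ(D)`, the distance from `X` to `Y` is the length of the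
shortest header of `Y` with respect to `X`: the least `k` such that the suffix
`y_{k+1} ⋯ y_D` is a tail of `Y` with respect to `X`. -/
theorem dist_eq_shortest_header (Δ D : ℕ) (hD : 1 ≤ D) (hΔ : D ≤ Δ)
    (X Y : List ℕ) (hX : IsVtx Δ D X) (hY : IsVtx Δ D Y) :
    cpDist (adjR Δ D 0) X Y = sInf {k | IsTail X Y k} :=
  dist_eq_shortest_header_general Δ D X Y hX hY
end

section
/- The cycle prefix digraph Γ_Δ(D) has the unique shortest path property: between any two distinct vertices X and Y there is exactly one shortest directed path. -/
/-!
Write `Y = y_1 ⋯ y_D`. Every arc puts one letter in front and keeps the order of the others,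
so after a walk of length `k` ending at `Y` the last `k` arcs have brought `y_k, …, y_1` to the
front, and what survives of the start `X` (with those letters deleted) must begin with
`y_{k+1} ⋯ y_D`. Conversely, when this prefix condition holds, moving `y_k, …, y_1` to the
front one at a time reaches `Y` in `k` steps. Hence `d(X, Y)` is the least such `k`. An arc is
determined by its new first letter, and on a shortest walk the first arc must bring `y_d` to
the front, `d = d(X, Y)`; so the shortest walk is unique.
-/

open List

section Lists

variable {α : Type*} [DecidableEq α]

namespace List

theorem filter_erase_of_eq_false {p : α → Bool} {c : α} (hc : p c = false) (l : List α) :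
    (l.erase c).filter p = l.filter p := by
  rw [← erase_filter, erase_of_not_mem]
  simp [hc]

theorem length_filter_mem_lt {l T : List α} {c : α} (hl : l.Nodup) (hcT : c ∈ T)
    (hcl : c ∉ l) : (l.filter (· ∈ T)).length < T.length := by
  have hsub : (l.filter (· ∈ T)).length ≤ (T.erase c).length :=
    (hl.filter _).length_le_of_subset fun a ha => by
      simp only [mem_filter, decide_eq_true_eq] at ha
      exact (mem_erase_of_ne (by rintro rfl; exact hcl ha.1)).2 ha.2
  rw [length_erase_of_mem hcT] at hsub
  have := length_pos_of_mem hcT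
  omega

end List

/-- The arc of `Γ_Δ(D)` out of `Z` with new first letter `c`: the rotation bringing `c` to the
front if `c` occurs in `Z`, the shift `S_c` otherwise. -/
def moveToFront (Z : List α) (c : α) : List α :=
  c :: if c ∈ Z then Z.erase c else Z.dropLast

section moveToFront

variable {Z : List α} {c : α}

theorem moveToFront_eq_cons_tail : moveToFront Z c = c :: (moveToFront Z c).tail :=
  rfl

theorem moveToFront_eq_self (h : Z.head? = some c) : moveToFront Z c = Z := by
  obtain ⟨t, rfl⟩ := head?_eq_some_iff.1 h
  simp [moveToFront]

theorem mem_moveToFront {x : α} (h : x ∈ moveToFront Z c) : x = c ∨ x ∈ Z := by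
  unfold moveToFront at h
  split_ifs at h
  · exact (mem_cons.1 h).imp_right (erase_subset ·)
  · exact (mem_cons.1 h).imp_right (dropLast_subset _ ·)

theorem nodup_moveToFront (hZ : Z.Nodup) : (moveToFront Z c).Nodup := by
  unfold moveToFront
  split_ifs with hc
  · exact nodup_cons.2 ⟨fun h => (hZ.mem_erase_iff.1 h).1 rfl, hZ.erase c⟩
  · exact nodup_cons.2 ⟨fun h => hc (dropLast_subset _ h), (dropLast_sublist Z).nodup hZ⟩

theorem length_moveToFront (hZ : Z ≠ []) : (moveToFront Z c).length = Z.length := by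
  have := length_pos_iff.2 hZ
  unfold moveToFront
  split_ifs with hc
  · rw [length_cons, length_erase_of_mem hc]; omega
  · rw [length_cons, length_dropLast]; omega

theorem filter_tail_moveToFront_prefix {p : α → Bool} (hc : p c = false) (Z : List α) :
    (moveToFront Z c).tail.filter p <+: Z.filter p := by
  unfold moveToFront
  split_ifs
  · rw [tail_cons, filter_erase_of_eq_false hc]
  · exact (dropLast_prefix Z).filter p

theorem length_le_filter_tail_moveToFront {T : List α} (hZ : Z.Nodup) (hcT : c ∈ T) :
    Z.length ≤ ((moveToFront Z c).tail.filter (· ∉ T)).length + T.length := by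
  rcases eq_or_ne Z [] with rfl | hZne
  · simp
  have hR := nodup_moveToFront (c := c) hZ
  have hRlen := length_moveToFront (c := c) hZne
  rw [moveToFront, nodup_cons] at hR
  rw [moveToFront, length_cons] at hRlen
  have hsplit := length_eq_length_filter_add (l := (moveToFront Z c).tail) (· ∈ T)
  have hlt := length_filter_mem_lt hR.2 hcT hR.1
  simp only [moveToFront, tail_cons, decide_not] at hsplit hlt ⊢
  omega

end moveToFront

/-- Combinatorial form of `d(X, Y) ≤ k`: `y_{k+1} ⋯ y_D` is a prefix of `X` with the letters
`y_1, …, y_k` deleted. -/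
def Fits (k : ℕ) (X Y : List α) : Prop :=
  Y.drop k <+: X.filter (· ∉ Y.take k)

noncomputable def fitDist (X Y : List α) : ℕ :=
  sInf {k | Fits k X Y}

section Fits

variable {k : ℕ} {X Y Z : List α} {c : α}

theorem fits_length (X Y : List α) : Fits Y.length X Y := by
  simp [Fits]

theorem fits_zero_iff (h : X.length = Y.length) : Fits 0 X Y ↔ X = Y := by
  simp only [Fits, drop_zero, take_zero, not_mem_nil, not_false_eq_true, decide_true, filter_true]
  exact ⟨fun hp => (hp.eq_of_length h.symm).symm, fun h => h ▸ prefix_refl _⟩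

theorem Fits.of_moveToFront (hk : k < Y.length) (hc : c ≠ Y[k])
    (h : Fits k (moveToFront Z c) Y) : Fits k Z Y := by
  have hcT : c ∈ Y.take k := by
    by_contra hcT
    rw [Fits, drop_eq_getElem_cons hk, moveToFront, filter_cons_of_pos (by simpa using hcT),
      cons_prefix_cons] at h
    exact hc h.1.symm
  have hhead : (moveToFront Z c).filter (· ∉ Y.take k) =
      (moveToFront Z c).tail.filter (· ∉ Y.take k) := by
    simp [moveToFront, hcT]
  rw [Fits, hhead] at h
  exact h.trans (filter_tail_moveToFront_prefix (by simpa using hcT) Z)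

theorem fits_moveToFront_iff (hY : Y.Nodup) (hZ : Z.Nodup) (hlen : Y.length ≤ Z.length)
    (hk : k < Y.length) : Fits k (moveToFront Z Y[k]) Y ↔ Fits (k + 1) Z Y := by
  set c := Y[k]
  have hYsplit : Y.take k ++ c :: Y.drop (k + 1) = Y := by
    rw [← drop_eq_getElem_cons hk, take_append_drop]
  have hcT : c ∉ Y.take k := by
    have := hYsplit ▸ hY
    rw [nodup_append] at this
    exact fun h => this.2.2 c h c mem_cons_self rfl
  have htake : Y.take (k + 1) = Y.take k ++ [c] := by
    rw [take_add_one, getElem?_eq_getElem hk]; rfl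
  have hcR : c ∉ (moveToFront Z c).tail := (nodup_cons.1 (nodup_moveToFront (c := c) hZ)).1
  have hfilter : (moveToFront Z c).tail.filter (· ∉ Y.take k) =
      (moveToFront Z c).tail.filter (· ∉ Y.take (k + 1)) :=
    filter_congr fun a ha => by
      simp [htake, show a ≠ c by rintro rfl; exact hcR ha]
  have hpre : (moveToFront Z c).tail.filter (· ∉ Y.take (k + 1)) <+:
      Z.filter (· ∉ Y.take (k + 1)) :=
    filter_tail_moveToFront_prefix (by simp [htake]) Z
  have hlong : (Y.drop (k + 1)).length ≤
      ((moveToFront Z c).tail.filter (· ∉ Y.take (k + 1))).length := by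
    have := length_le_filter_tail_moveToFront (c := c) (T := Y.take (k + 1)) hZ (by simp [htake])
    simp only [length_drop, length_take] at this ⊢
    omega
  rw [Fits, Fits, drop_eq_getElem_cons hk, moveToFront_eq_cons_tail,
    filter_cons_of_pos (by simpa using hcT), cons_prefix_cons, hfilter]
  exact ⟨fun h => h.2.trans hpre,
    fun h => ⟨rfl, prefix_of_prefix_length_le h hpre (by simpa using hlong)⟩⟩

end Fits

section fitDist

variable {X Y Z : List α} {c : α}

theorem fits_fitDist : Fits (fitDist X Y) X Y :=
  Nat.sInf_mem (s := {k | Fits k X Y}) ⟨_, fits_length X Y⟩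

theorem fitDist_le {k : ℕ} (h : Fits k X Y) : fitDist X Y ≤ k :=
  Nat.sInf_le h

theorem fitDist_le_length : fitDist X Y ≤ Y.length :=
  fitDist_le (fits_length X Y)

theorem fitDist_self : fitDist Y Y = 0 :=
  Nat.le_zero.1 (fitDist_le ((fits_zero_iff rfl).2 rfl))

theorem fitDist_le_fitDist_moveToFront_add_one (hY : Y.Nodup) (hZ : Z.Nodup)
    (hlen : Y.length ≤ Z.length) : fitDist Z Y ≤ fitDist (moveToFront Z c) Y + 1 := by
  have hfits : Fits (fitDist (moveToFront Z c) Y) (moveToFront Z c) Y := fits_fitDist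
  generalize fitDist (moveToFront Z c) Y = k at hfits ⊢
  by_cases hk : k < Y.length
  · by_cases hc : c = Y[k]
    · rw [hc] at hfits
      exact fitDist_le ((fits_moveToFront_iff hY hZ hlen hk).1 hfits)
    · exact (fitDist_le (hfits.of_moveToFront hk hc)).trans k.le_succ
  · exact fitDist_le_length.trans (by omega)

theorem getElem?_fitDist_moveToFront (h : fitDist Z Y = fitDist (moveToFront Z c) Y + 1) :
    Y[fitDist (moveToFront Z c) Y]? = some c := by
  have hfits : Fits (fitDist (moveToFront Z c) Y) (moveToFront Z c) Y := fits_fitDist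
  have hlt : fitDist Z Y ≤ Y.length := fitDist_le_length
  generalize fitDist (moveToFront Z c) Y = k at hfits h ⊢
  have hk : k < Y.length := by omega
  by_contra hc
  rw [getElem?_eq_getElem hk, Option.some_inj] at hc
  have := fitDist_le (hfits.of_moveToFront hk (Ne.symm hc))
  omega

end fitDist

end Lists

namespace IsWalk

variable {V : Type*} {A : V → V → Prop} {u v x : V} {n : ℕ} {w : ℕ → V}

theorem eq_of_length_zero (h : IsWalk A u v 0 w) : u = v :=
  h.1.symm.trans h.2.1

theorem adj_first (h : IsWalk A u v (n + 1) w) : A u (w 1) :=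
  h.1 ▸ h.2.2 0 n.succ_pos

theorem tail_s13 (h : IsWalk A u v (n + 1) w) : IsWalk A (w 1) v n (fun i => w (i + 1)) :=
  ⟨rfl, h.2.1, fun i hi => h.2.2 (i + 1) (by omega)⟩

theorem cons_s13 (hux : A u x) (h : IsWalk A x v n w) :
    IsWalk A u v (n + 1) (fun | 0 => u | i + 1 => w i) :=
  ⟨rfl, h.2.1, fun | 0, _ => show A u (w 0) from h.1 ▸ hux | i + 1, hi => h.2.2 i (by omega)⟩

end IsWalk

theorem cpDist_eq_of_isWalk {V : Type*} {A : V → V → Prop} {u v : V} {m : ℕ} {w : ℕ → V}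
    (hw : IsWalk A u v m w) (hmin : ∀ n w, IsWalk A u v n w → m ≤ n) : cpDist A u v = m := by
  refine le_antisymm (Nat.sInf_le ⟨w, hw⟩) ?_
  obtain ⟨w', hw'⟩ := Nat.sInf_mem (s := {n | ∃ w, IsWalk A u v n w}) ⟨m, w, hw⟩
  exact hmin _ _ hw'

section CyclePrefix

variable {Δ D : ℕ} {Y Z W : List ℕ}

theorem exists_eq_moveToFront_of_adjR (h : adjR Δ D 0 Z W) : ∃ c, W = moveToFront Z c := by
  obtain ⟨⟨hZl, hZn, -⟩, -, ⟨j, -, hj, rfl⟩ | ⟨y, hy, rfl⟩⟩ := h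
  · have hjZ : j < Z.length := hZl ▸ hj
    refine ⟨Z[j], ?_⟩
    rw [moveToFront, if_pos (getElem_mem hjZ), hZn.erase_getElem, getD_eq_getElem]
  · exact ⟨y, by rw [moveToFront, if_neg hy]⟩

theorem adjR_moveToFront {c : ℕ} (hZ : IsVtx Δ D Z) (hD : 0 < D) (hc : 1 ≤ c ∧ c ≤ Δ + 1)
    (hhead : Z.head? ≠ some c) : adjR Δ D 0 Z (moveToFront Z c) := by
  obtain ⟨hZl, hZn, hZΔ⟩ := hZ
  have hZne : Z ≠ [] := ne_nil_of_length_pos (hZl ▸ hD)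
  refine ⟨⟨hZl, hZn, hZΔ⟩,
    ⟨(length_moveToFront hZne).trans hZl, nodup_moveToFront hZn, fun x hx => ?_⟩, ?_⟩
  · rcases mem_moveToFront hx with rfl | hx
    exacts [hc, hZΔ x hx]
  by_cases hcZ : c ∈ Z
  · have hidx := idxOf_lt_length_iff.2 hcZ
    refine Or.inl ⟨Z.idxOf c, Nat.pos_of_ne_zero fun h0 => hhead ?_, hZl ▸ hidx, ?_⟩
    · rw [head?_eq_getElem?, ← h0, getElem?_eq_getElem hidx, getElem_idxOf]
    · rw [moveToFront, if_pos hcZ, getD_eq_getElem _ _ hidx, getElem_idxOf,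
        eraseIdx_idxOf_eq_erase]
  · exact Or.inr ⟨c, hcZ, by rw [moveToFront, if_neg hcZ]⟩

theorem fitDist_le_fitDist_add_one_of_adjR (hY : IsVtx Δ D Y) (h : adjR Δ D 0 Z W) :
    fitDist Z Y ≤ fitDist W Y + 1 := by
  obtain ⟨c, rfl⟩ := exists_eq_moveToFront_of_adjR h
  exact fitDist_le_fitDist_moveToFront_add_one hY.2.1 h.1.2.1 (hY.1.trans h.1.1.symm).le

theorem eq_of_adjR_of_fitDist_eq_add_one {W' : List ℕ} (hW : adjR Δ D 0 Z W)
    (hW' : adjR Δ D 0 Z W') (h : fitDist Z Y = fitDist W Y + 1)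
    (h' : fitDist Z Y = fitDist W' Y + 1) : W = W' := by
  obtain ⟨c, rfl⟩ := exists_eq_moveToFront_of_adjR hW
  obtain ⟨c', rfl⟩ := exists_eq_moveToFront_of_adjR hW'
  have hc := getElem?_fitDist_moveToFront h
  have hc' := getElem?_fitDist_moveToFront h'
  rw [show fitDist (moveToFront Z c) Y = fitDist (moveToFront Z c') Y by omega, hc'] at hc
  rw [Option.some_inj.1 hc]

theorem fitDist_le_of_isWalk (hY : IsVtx Δ D Y) :
    ∀ {n : ℕ} {Z : List ℕ} {w : ℕ → List ℕ}, IsWalk (adjR Δ D 0) Z Y n w → fitDist Z Y ≤ n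
  | 0, _, _, hw => by rw [hw.eq_of_length_zero, fitDist_self]
  | n + 1, _, _, hw => by
    have := fitDist_le_of_isWalk hY hw.tail_s13
    have := fitDist_le_fitDist_add_one_of_adjR hY hw.adj_first
    omega

theorem exists_isWalk_fitDist (hY : IsVtx Δ D Y) (hZ : IsVtx Δ D Z) :
    ∃ w, IsWalk (adjR Δ D 0) Z Y (fitDist Z Y) w := by
  generalize hk : fitDist Z Y = k
  induction k generalizing Z with
  | zero =>
    refine ⟨fun _ => Z, rfl, ?_, by simp⟩
    exact (fits_zero_iff (hZ.1.trans hY.1.symm)).1 (hk ▸ fits_fitDist)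
  | succ k ih =>
    have hkY : k < Y.length := by have := fitDist_le_length (X := Z) (Y := Y); omega
    have hfits : Fits (k + 1) Z Y := hk ▸ fits_fitDist
    have hlen : Y.length ≤ Z.length := (hY.1.trans hZ.1.symm).le
    have hW : Fits k (moveToFront Z Y[k]) Y :=
      (fits_moveToFront_iff hY.2.1 hZ.2.1 hlen hkY).2 hfits
    have hhead : Z.head? ≠ some Y[k] := fun h => by
      rw [moveToFront_eq_self h] at hW
      have := fitDist_le hW
      omega
    have harc :=
      adjR_moveToFront hZ (hY.1 ▸ Nat.zero_lt_of_lt hkY) (hY.2.2 _ (getElem_mem hkY)) hhead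
    obtain ⟨w, hw⟩ := ih harc.2.1 <| le_antisymm (fitDist_le hW) <| by
      have := fitDist_le_fitDist_add_one_of_adjR hY harc
      omega
    exact ⟨_, hw.cons_s13 harc⟩

theorem isWalk_eq_of_length_fitDist (hY : IsVtx Δ D Y) :
    ∀ {n : ℕ} {Z : List ℕ} {w w' : ℕ → List ℕ}, IsWalk (adjR Δ D 0) Z Y n w →
      IsWalk (adjR Δ D 0) Z Y n w' → fitDist Z Y = n → ∀ i ≤ n, w i = w' i
  | 0, _, _, _, hw, hw', _, i, hi => by rw [Nat.le_zero.1 hi, hw.1, hw'.1]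
  | n + 1, Z, w, w', hw, hw', hn, i, hi => by
    have hstep : ∀ {v : ℕ → List ℕ}, IsWalk (adjR Δ D 0) Z Y (n + 1) v →
        fitDist Z Y = fitDist (v 1) Y + 1 := fun hv => by
      have := fitDist_le_of_isWalk hY hv.tail_s13
      have := fitDist_le_fitDist_add_one_of_adjR hY hv.adj_first
      omega
    have h1 : w 1 = w' 1 :=
      eq_of_adjR_of_fitDist_eq_add_one hw.adj_first hw'.adj_first (hstep hw) (hstep hw')
    match i with
    | 0 => exact hw.1.trans hw'.1.symm
    | i + 1 =>
      refine isWalk_eq_of_length_fitDist hY hw.tail_s13 (h1 ▸ hw'.tail_s13) ?_ i (by omega)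
      have := hstep hw
      omega

theorem cpDist_eq_fitDist (hY : IsVtx Δ D Y) (hZ : IsVtx Δ D Z) :
    cpDist (adjR Δ D 0) Z Y = fitDist Z Y :=
  have ⟨_, hw⟩ := exists_isWalk_fitDist hY hZ
  cpDist_eq_of_isWalk hw fun _ _ => fitDist_le_of_isWalk hY

end CyclePrefix

theorem unique_shortest_path_general (Δ D : ℕ)
    (X Y : List ℕ) (hX : IsVtx Δ D X) (hY : IsVtx Δ D Y) :
    (∃ w, IsWalk (adjR Δ D 0) X Y (cpDist (adjR Δ D 0) X Y) w) ∧
    ∀ w w', IsWalk (adjR Δ D 0) X Y (cpDist (adjR Δ D 0) X Y) w →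
      IsWalk (adjR Δ D 0) X Y (cpDist (adjR Δ D 0) X Y) w' →
      ∀ i ≤ cpDist (adjR Δ D 0) X Y, w i = w' i := by
  rw [cpDist_eq_fitDist hY hX]
  exact ⟨exists_isWalk_fitDist hY hX,
    fun _ _ hw hw' => isWalk_eq_of_length_fitDist hY hw hw' rfl⟩

/-- `Γ_Δ(D)` has the unique shortest path property: between any
two distinct vertices there is exactly one shortest directed path. -/
theorem unique_shortest_path (Δ D : ℕ) (hD : 2 ≤ D) (hΔ : D ≤ Δ)
    (X Y : List ℕ) (hX : IsVtx Δ D X) (hY : IsVtx Δ D Y) (hne : X ≠ Y) :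
    (∃ w, IsWalk (adjR Δ D 0) X Y (cpDist (adjR Δ D 0) X Y) w) ∧
    ∀ w w', IsWalk (adjR Δ D 0) X Y (cpDist (adjR Δ D 0) X Y) w →
      IsWalk (adjR Δ D 0) X Y (cpDist (adjR Δ D 0) X Y) w' →
      ∀ i ≤ cpDist (adjR Δ D 0) X Y, w i = w' i :=
  unique_shortest_path_general Δ D X Y hX hY
end

section
/- Let X = x_1x_2⋯x_D be a vertex of Γ_Δ(D) with x_1 = 1, let Y = 12⋯D, and suppose d(X,Y) = k. For 2 ≤ i ≤ Δ+1, let X_i = i∘X be the out-neighbor of X with first letter i, and let Y_i be: 23⋯i 1 (i+1)⋯D if 2 ≤ i ≤ D, and 23⋯D i if D < i ≤ Δ+1. Then d(X_i,Y_i) = k if 1 < i < k; d(X_i,Y_i) = k−2 if i = k; d(X_i,Y_i) = i−2 if k < i ≤ D; and d(X_i,Y_i) = D−1 if i > D. -/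
/-- `i ∘ X`: the out-neighbor of `X` beginning with the letter `i`. -/
def comp (i : ℕ) (X : List ℕ) : List ℕ :=
  if i ∈ X then i :: X.erase i else i :: X.dropLast

/-- The in-neighbor `Y_i` of `Y = 12⋯D`: `2 3 ⋯ i 1 (i+1) ⋯ D` for `2 ≤ i ≤ D`,
and `2 3 ⋯ D i` for `D < i`. -/
def Yi (D i : ℕ) : List ℕ :=
  if i ≤ D then List.range' 2 (i - 1) ++ 1 :: List.range' (i + 1) (D - i)
  else List.range' 2 (D - 1) ++ [i]

/-!
Prepending the letters `t, t-1, …, 1` to a vertex `W` (the `s`-th step is the arc to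
`(t-s) ∘ ·`) ends at `12⋯D` exactly when what is left of `W` is `(t+1)⋯D`. The least such `t`
whose first step is a genuine arc, the greedy time of `W`, equals `d(W, 12⋯D)`: the greedy walk
realises it, and an arc `W → c ∘ W` lowers it by at most one, because the tails left by
prepending distinct letters do not depend on the order in which they are prepended.

A permutation `σ` of the alphabet is an automorphism of `Γ_Δ(D)`, and the cycle
`σ = (1 i (i-1) ⋯ 2)` (for `i > D`: `(1 i D (D-1) ⋯ 2)`) carries `Y_i` to `12⋯D`. So
`d(X_i, Y_i)` is the greedy time of `σ(X_i) = σ(i) ∘ σ(X)`. As `σ` moves only letters `≤ i`,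
from time `i` on the greedy runs of `σ(X)` are those of `X` relabelled, which gives the four cases.
-/

namespace CyclePrefix

section Residue

variable {L M P R s s' : List ℕ} {c d x : ℕ}

def compTail (L : List ℕ) (c : ℕ) : List ℕ := if c ∈ L then L.erase c else L.dropLast

theorem comp_eq_cons_compTail (c : ℕ) (L : List ℕ) : comp c L = c :: compTail L c := by
  unfold comp compTail; split_ifs <;> rfl

theorem compTail_of_mem (hc : c ∈ L) : compTail L c = L.erase c := if_pos hc

theorem compTail_of_notMem (hc : c ∉ L) : compTail L c = L.dropLast := if_neg hc

@[simp] theorem compTail_cons_self (c : ℕ) (L : List ℕ) : compTail (c :: L) c = L := by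
  simp [compTail]

theorem compTail_cons_of_ne (hcx : c ≠ x) (hM : M ≠ []) :
    compTail (x :: M) c = x :: compTail M c := by
  by_cases hc : c ∈ M
  · simp [compTail, hc, List.erase_cons_tail (by simpa using hcx.symm : ¬(x == c) = true)]
  · simp [compTail, hc, hcx, List.dropLast_cons_of_ne_nil hM]

theorem compTail_append_of_notMem (hc : c ∉ P) (hR : R ≠ []) :
    compTail (P ++ R) c = P ++ compTail R c := by
  by_cases hcR : c ∈ R
  · simp [compTail, hcR, List.erase_append_right _ hc]
  · simp [compTail, hcR, hc, List.dropLast_append_of_ne_nil hR]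

theorem length_compTail (L : List ℕ) (c : ℕ) : (compTail L c).length = L.length - 1 := by
  unfold compTail; split_ifs with h
  · exact List.length_erase_of_mem h
  · exact List.length_dropLast

theorem compTail_range'_self (a n : ℕ) :
    compTail (List.range' a n) a = List.range' (a + 1) (n - 1) := by
  cases n with
  | zero => rfl
  | succ n => rw [List.range'_succ, compTail_cons_self, Nat.add_sub_cancel]

theorem headI_comp (c : ℕ) (L : List ℕ) : (comp c L).headI = c := by
  rw [comp_eq_cons_compTail]; rfl

theorem length_comp (hL : L ≠ []) (c : ℕ) : (comp c L).length = L.length := by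
  rw [comp_eq_cons_compTail, List.length_cons, length_compTail]
  have := List.length_pos_iff.2 hL
  omega

theorem nodup_comp (hL : L.Nodup) (c : ℕ) : (comp c L).Nodup := by
  unfold comp
  split_ifs with hc
  · exact List.nodup_cons.2 ⟨hL.not_mem_erase, hL.sublist (List.erase_sublist ..)⟩
  · exact List.nodup_cons.2 ⟨fun h => hc (List.dropLast_subset _ h),
      hL.sublist (List.dropLast_sublist _)⟩

theorem compTail_comm_of_mem_of_notMem (hc : c ∈ L) (hd : d ∉ L) :
    compTail (compTail L c) d = compTail (compTail L d) c := by
  have hd' : d ∉ L.erase c := fun h => hd (List.erase_subset h)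
  rw [compTail_of_mem hc, compTail_of_notMem hd', compTail_of_notMem hd]
  obtain ⟨A, e, rfl⟩ := (List.eq_nil_or_concat L).resolve_left (List.ne_nil_of_mem hc)
  rw [List.concat_eq_append] at hc ⊢
  rw [List.dropLast_concat]
  by_cases hcA : c ∈ A
  · rw [List.erase_append_left _ hcA, List.dropLast_concat, compTail_of_mem hcA]
  · obtain rfl : c = e := by simpa [hcA] using hc
    rw [List.erase_append_right _ hcA, List.erase_cons_head, List.append_nil,
      compTail_of_notMem hcA]

theorem compTail_comm (hcd : c ≠ d) (L : List ℕ) :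
    compTail (compTail L c) d = compTail (compTail L d) c := by
  by_cases hc : c ∈ L <;> by_cases hd : d ∈ L
  · simp [compTail, hc, hd, List.mem_erase_of_ne hcd, List.mem_erase_of_ne hcd.symm,
      List.erase_comm]
  · exact compTail_comm_of_mem_of_notMem hc hd
  · exact (compTail_comm_of_mem_of_notMem hd hc).symm
  · have hc' : c ∉ L.dropLast := fun h => hc (List.dropLast_subset _ h)
    have hd' : d ∉ L.dropLast := fun h => hd (List.dropLast_subset _ h)
    simp [compTail, hc, hd, hc', hd']

/-- What is left of `L` after prepending the letters of `s`, one after the other. -/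
def residue (L s : List ℕ) : List ℕ := s.foldl compTail L

theorem residue_cons (L : List ℕ) (c : ℕ) (s : List ℕ) :
    residue L (c :: s) = residue (compTail L c) s := rfl

theorem residue_concat (L s : List ℕ) (c : ℕ) :
    residue L (s ++ [c]) = compTail (residue L s) c :=
  List.foldl_concat ..

theorem residue_perm (h : s.Perm s') (L : List ℕ) : residue L s = residue L s' := by
  refine h.foldl_eq' (fun x _ y _ L => ?_) L
  rcases eq_or_ne x y with rfl | hxy
  · rfl
  · exact compTail_comm hxy L

theorem residue_compTail (L : List ℕ) (c : ℕ) (s : List ℕ) :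
    residue (compTail L c) s = compTail (residue L s) c := by
  rw [← residue_cons, ← residue_concat, residue_perm (List.perm_append_singleton c s).symm]

theorem residue_comp (hc : c ∈ s) (L : List ℕ) : residue (comp c L) s = residue L s := by
  rw [residue_perm (List.perm_cons_erase hc) (comp c L), residue_perm (List.perm_cons_erase hc) L,
    residue_cons, residue_cons, comp_eq_cons_compTail, compTail_cons_self]

theorem length_residue (L s : List ℕ) : (residue L s).length = L.length - s.length := by
  induction s generalizing L with
  | nil => rfl
  | cons c s ih =>
    rw [residue_cons, ih, length_compTail, List.length_cons, Nat.sub_sub, Nat.add_comm 1]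

theorem residue_cons_of_notMem (hx : x ∉ s) (hlen : s.length ≤ M.length) :
    residue (x :: M) s = x :: residue M s := by
  induction s generalizing M with
  | nil => rfl
  | cons c s ih =>
    have hM : M ≠ [] := by rintro rfl; simp at hlen
    rw [List.mem_cons, not_or] at hx
    rw [residue_cons, compTail_cons_of_ne (Ne.symm hx.1) hM, ih hx.2, residue_cons]
    rw [length_compTail]
    simp only [List.length_cons] at hlen
    omega

theorem compTail_map {f : ℕ → ℕ} (hf : f.Injective) (L : List ℕ) (c : ℕ) :
    compTail (L.map f) (f c) = (compTail L c).map f := by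
  by_cases hc : c ∈ L
  · simp [compTail, hc, List.mem_map_of_injective hf, List.map_erase hf]
  · simp [compTail, hc, List.mem_map_of_injective hf, List.map_dropLast]

theorem residue_map {f : ℕ → ℕ} (hf : f.Injective) (L s : List ℕ) :
    residue (L.map f) (s.map f) = (residue L s).map f := by
  induction s generalizing L with
  | nil => rfl
  | cons c s ih => rw [List.map_cons, residue_cons, compTail_map hf, ih, residue_cons]

end Residue

section Permutation

variable {σ : Equiv.Perm ℕ} {a n : ℕ}

theorem apply_mem_Icc_iff_of_fixes (hσ : ∀ y ∉ Set.Icc 1 a, σ y = y) (han : a ≤ n) (x : ℕ) :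
    σ x ∈ Set.Icc 1 n ↔ x ∈ Set.Icc 1 n := by
  have hIcc : Set.Icc 1 a ⊆ Set.Icc 1 n := Set.Icc_subset_Icc_right han
  by_cases hx : x ∈ Set.Icc 1 a
  · have hσx : σ x ∈ Set.Icc 1 a := by
      by_contra h
      exact h (by rwa [σ.injective (hσ _ h)])
    exact iff_of_true (hIcc hσx) (hIcc hx)
  · rw [hσ x hx]

theorem range'_perm_map_of_fixes (hσ : ∀ y ∉ Set.Icc 1 a, σ y = y) (hat : a ≤ n) :
    ((List.range' 1 n).map σ).Perm (List.range' 1 n) := by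
  have hmem : ∀ x, x ∈ List.range' 1 n ↔ x ∈ Set.Icc 1 n := fun x => by
    rw [List.mem_range'_1, Set.mem_Icc]; omega
  refine (List.perm_ext_iff_of_nodup ((List.nodup_range' ..).map σ.injective)
    (List.nodup_range' ..)).2 fun y => ?_
  rw [List.mem_map, hmem]
  constructor
  · rintro ⟨x, hx, rfl⟩
    exact (apply_mem_Icc_iff_of_fixes hσ hat x).2 ((hmem x).1 hx)
  · intro hy
    refine ⟨σ.symm y, (hmem _).2 ((apply_mem_Icc_iff_of_fixes hσ hat _).1 ?_), σ.apply_symm_apply y⟩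
    rwa [σ.apply_symm_apply]

end Permutation

section Greedy

variable {D t u c x : ℕ} {W M : List ℕ}

/-- What is left of `W` once the letters `1, …, t` have been prepended, in any order. -/
def greedy (W : List ℕ) (t : ℕ) : List ℕ := residue W (List.range' 1 t)

@[simp] theorem greedy_zero (W : List ℕ) : greedy W 0 = W := rfl

theorem greedy_succ (W : List ℕ) (t : ℕ) :
    greedy W (t + 1) = compTail (greedy W t) (t + 1) := by
  rw [greedy, List.range'_1_concat, residue_concat, Nat.add_comm 1 t, greedy]

theorem greedy_succ_eq_greedy_compTail (W : List ℕ) (t : ℕ) :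
    greedy W (t + 1) = greedy (compTail W (t + 1)) t := by
  rw [greedy_succ, greedy, greedy, residue_compTail]

theorem length_greedy (W : List ℕ) (t : ℕ) : (greedy W t).length = W.length - t := by
  rw [greedy, length_residue, List.length_range']

theorem greedy_comp (hc : 1 ≤ c) (hct : c ≤ t) (W : List ℕ) :
    greedy (comp c W) t = greedy W t :=
  residue_comp (List.mem_range'_1.2 ⟨hc, by omega⟩) W

theorem greedy_cons_of_lt (hxt : t < x) (hlen : t ≤ M.length) :
    greedy (x :: M) t = x :: greedy M t :=
  residue_cons_of_notMem (fun h => by have := List.mem_range'_1.1 h; omega) (by simpa using hlen)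

theorem greedy_cons_self (hx : 1 ≤ x) (M : List ℕ) : greedy (x :: M) x = greedy M (x - 1) := by
  obtain ⟨y, rfl⟩ : ∃ y, x = y + 1 := ⟨x - 1, by omega⟩
  rw [greedy_succ_eq_greedy_compTail, compTail_cons_self, Nat.add_sub_cancel]

theorem greedy_map {σ : Equiv.Perm ℕ} {a : ℕ} (hσ : ∀ y ∉ Set.Icc 1 a, σ y = y) (hat : a ≤ t)
    (W : List ℕ) : greedy (W.map σ) t = (greedy W t).map σ := by
  rw [greedy, greedy, ← residue_map σ.injective, residue_perm (range'_perm_map_of_fixes hσ hat)]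

/-- Prepending `t, t-1, …, 1` to `W` leads to `12⋯D`. -/
def GreedyReaches (D : ℕ) (W : List ℕ) (t : ℕ) : Prop :=
  greedy W t = List.range' (t + 1) (D - t)

theorem GreedyReaches.succ (h : GreedyReaches D W t) : GreedyReaches D W (t + 1) := by
  rw [GreedyReaches, greedy_succ, h, compTail_range'_self, Nat.sub_sub]

theorem GreedyReaches.mono (h : GreedyReaches D W t) (htu : t ≤ u) : GreedyReaches D W u := by
  induction u, htu using Nat.le_induction with
  | base => exact h
  | succ _ _ ih => exact ih.succ

theorem greedyReaches_of_le (hlen : W.length = D) (hDt : D ≤ t) : GreedyReaches D W t := by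
  have h : (greedy W t).length = 0 := by rw [length_greedy]; omega
  rw [GreedyReaches, List.length_eq_zero_iff.1 h, Nat.sub_eq_zero_of_le hDt, List.range'_zero]

theorem greedyReaches_comp_iff_of_lt (hct : t < c) (hlen : W.length = D) (htD : t < D) :
    GreedyReaches D (comp c W) t ↔ c = t + 1 ∧ GreedyReaches D W (t + 1) := by
  rw [GreedyReaches, comp_eq_cons_compTail,
    greedy_cons_of_lt hct (by rw [length_compTail]; omega),
    show D - t = D - (t + 1) + 1 by omega, List.range'_succ, List.cons.injEq]
  refine and_congr_right fun hc => ?_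
  rw [GreedyReaches, hc, greedy_succ_eq_greedy_compTail]

theorem greedyReaches_comp_iff_of_le (hc : 1 ≤ c) (hct : c ≤ t) :
    GreedyReaches D (comp c W) t ↔ GreedyReaches D W t := by
  rw [GreedyReaches, GreedyReaches, greedy_comp hc hct]

theorem greedyReaches_cons_pred_iff (hx : 1 ≤ x) (hxD : x ≤ D) (hlen : M.length + 1 = D) :
    GreedyReaches D (x :: M) (x - 1) ↔ GreedyReaches D (x :: M) x := by
  rw [GreedyReaches, GreedyReaches, greedy_cons_of_lt (by omega) (by omega), greedy_cons_self hx,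
    show D - (x - 1) = D - x + 1 by omega, List.range'_succ, Nat.sub_add_cancel hx,
    List.cons.injEq, and_iff_right rfl]

theorem greedyReaches_map_iff {σ : Equiv.Perm ℕ} {a : ℕ} (hσ : ∀ y ∉ Set.Icc 1 a, σ y = y)
    (hat : a ≤ t) : GreedyReaches D (W.map σ) t ↔ GreedyReaches D W t := by
  have hfix : (List.range' (t + 1) (D - t)).map σ = List.range' (t + 1) (D - t) := by
    refine (List.map_congr_left fun y hy => hσ y ?_).trans (List.map_id _)
    have := List.mem_range'_1.1 hy
    simp only [Set.mem_Icc]; omega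
  rw [GreedyReaches, GreedyReaches, greedy_map hσ hat]
  conv_lhs => rw [← hfix]
  exact (List.map_injective_iff.2 σ.injective).eq_iff

/-- The head condition says that the first of the `t` steps is an arc: `R_1` is not one. -/
def IsGreedyTime (D : ℕ) (W : List ℕ) (t : ℕ) : Prop :=
  GreedyReaches D W t ∧ (t = 0 ∨ W.headI ≠ t)

noncomputable def greedyTime (D : ℕ) (W : List ℕ) : ℕ := sInf {t | IsGreedyTime D W t}

theorem greedyTime_le_of_isGreedyTime (h : IsGreedyTime D W t) : greedyTime D W ≤ t :=
  Nat.sInf_le h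

theorem greedyTime_eq_of_isGreedyTime (h : IsGreedyTime D W t)
    (hmin : ∀ u < t, ¬IsGreedyTime D W u) : greedyTime D W = t :=
  le_antisymm (Nat.sInf_le h) (le_csInf ⟨t, h⟩ fun u hu => not_lt.1 fun hut => hmin u hut hu)

theorem exists_isGreedyTime_le (hlen : W.length = D) : ∃ t ≤ D, IsGreedyTime D W t := by
  by_cases h : D ≠ 0 ∧ W.headI = D
  · obtain ⟨M, rfl⟩ : ∃ M, W = D :: M := by
      cases W with
      | nil => simp at hlen; omega
      | cons x M => exact ⟨M, by rw [← h.2]; rfl⟩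
    have hM : M.length + 1 = D := hlen
    exact ⟨D - 1, by omega,
      (greedyReaches_cons_pred_iff (by omega) le_rfl hM).2 (greedyReaches_of_le hlen le_rfl),
      Or.inr (by rw [h.2]; omega)⟩
  · exact ⟨D, le_rfl, greedyReaches_of_le hlen le_rfl, by tauto⟩

theorem isGreedyTime_greedyTime (hlen : W.length = D) : IsGreedyTime D W (greedyTime D W) :=
  Nat.sInf_mem (by obtain ⟨t, -, ht⟩ := exists_isGreedyTime_le hlen; exact ⟨t, ht⟩)

theorem greedyTime_le (hlen : W.length = D) : greedyTime D W ≤ D := by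
  obtain ⟨t, htD, ht⟩ := exists_isGreedyTime_le hlen
  exact (greedyTime_le_of_isGreedyTime ht).trans htD

theorem greedyTime_le_succ_of_greedyReaches (h : GreedyReaches D W t) :
    greedyTime D W ≤ t + 1 := by
  by_cases ht : t = 0 ∨ W.headI ≠ t
  · exact (greedyTime_le_of_isGreedyTime ⟨h, ht⟩).trans t.le_succ
  · exact greedyTime_le_of_isGreedyTime ⟨h.succ, Or.inr (by omega)⟩

theorem greedyTime_le_greedyTime_comp_add_one (hlen : W.length = D) (hc : 1 ≤ c)
    (hcW : c ≠ W.headI) : greedyTime D W ≤ greedyTime D (comp c W) + 1 := by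
  set t := greedyTime D (comp c W)
  by_cases htD : D ≤ t
  · exact (greedyTime_le hlen).trans (by omega)
  have hW : W ≠ [] := by rintro rfl; simp at hlen; omega
  have ht := (isGreedyTime_greedyTime ((length_comp hW c).trans hlen)).1
  rcases lt_or_ge t c with htc | hct
  · obtain ⟨hct, hW⟩ := (greedyReaches_comp_iff_of_lt htc hlen (by omega)).1 ht
    exact greedyTime_le_of_isGreedyTime ⟨hW, Or.inr (hct ▸ hcW.symm)⟩
  · exact greedyTime_le_succ_of_greedyReaches ((greedyReaches_comp_iff_of_le hc hct).1 ht)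

theorem isGreedyTime_comp_iff (hc : 1 ≤ c) (hcD : c ≤ D) (hlen : W.length = D) :
    IsGreedyTime D (comp c W) t ↔
      (t + 1 = c ∧ GreedyReaches D W c) ∨ (c < t ∧ GreedyReaches D W t) := by
  rw [IsGreedyTime, headI_comp]
  rcases lt_trichotomy t c with htc | rfl | hct
  · rw [greedyReaches_comp_iff_of_lt htc hlen (by omega)]
    constructor
    · rintro ⟨⟨rfl, h⟩, -⟩
      exact Or.inl ⟨rfl, h⟩
    · rintro (⟨rfl, h⟩ | ⟨h, -⟩)
      · exact ⟨⟨rfl, h⟩, Or.inr (by omega)⟩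
      · omega
  · constructor
    · rintro ⟨-, h | h⟩ <;> omega
    · rintro (⟨h, -⟩ | ⟨h, -⟩) <;> omega
  · rw [greedyReaches_comp_iff_of_le hc hct.le]
    exact ⟨fun h => Or.inr ⟨hct, h.1⟩, fun h => ⟨h.elim (fun h => by omega) And.right,
      Or.inr (by omega)⟩⟩

theorem greedyTime_comp_of_greedyReaches (hc : 1 ≤ c) (hcD : c ≤ D) (hlen : W.length = D)
    (h : GreedyReaches D W c) : greedyTime D (comp c W) = c - 1 :=
  greedyTime_eq_of_isGreedyTime ((isGreedyTime_comp_iff hc hcD hlen).2 (Or.inl ⟨by omega, h⟩))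
    fun u hu h' => by
      rcases (isGreedyTime_comp_iff hc hcD hlen).1 h' with ⟨h, -⟩ | ⟨h, -⟩ <;> omega

end Greedy

section Digraph

variable {Δ D c t s : ℕ} {W W' : List ℕ}

theorem isVtx_comp (hW : IsVtx Δ D W) (hD : 1 ≤ D) (hc : 1 ≤ c) (hcΔ : c ≤ Δ + 1) :
    IsVtx Δ D (comp c W) := by
  obtain ⟨hlen, hnd, hbd⟩ := hW
  have hW : W ≠ [] := by rintro rfl; simp at hlen; omega
  refine ⟨(length_comp hW c).trans hlen, nodup_comp hnd c, fun x hx => ?_⟩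
  rw [comp_eq_cons_compTail, List.mem_cons] at hx
  rcases hx with rfl | hx
  · exact ⟨hc, hcΔ⟩
  · unfold compTail at hx
    split_ifs at hx
    · exact hbd x (List.erase_subset hx)
    · exact hbd x (List.dropLast_subset _ hx)

theorem adjR_comp (hW : IsVtx Δ D W) (hD : 1 ≤ D) (hc : 1 ≤ c) (hcΔ : c ≤ Δ + 1)
    (hcW : c ≠ W.headI) : adjR Δ D 0 W (comp c W) := by
  refine ⟨hW, isVtx_comp hW hD hc hcΔ, ?_⟩
  by_cases hcm : c ∈ W
  · have hj := List.idxOf_lt_length_of_mem hcm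
    refine Or.inl ⟨W.idxOf c, ?_, hW.1 ▸ hj, ?_⟩
    · obtain ⟨x, W, rfl⟩ := List.exists_cons_of_ne_nil (List.ne_nil_of_mem hcm)
      rw [List.idxOf_cons_ne _ (Ne.symm hcW : x ≠ c)]
      omega
    · rw [List.getD_eq_getElem _ _ hj, List.getElem_idxOf, List.eraseIdx_idxOf_eq_erase, comp,
        if_pos hcm]
  · exact Or.inr ⟨c, hcm, by rw [comp, if_neg hcm]⟩

theorem getElem_ne_headI (hW : W.Nodup) {j : ℕ} (hj : 1 ≤ j) (hjW : j < W.length) :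
    W[j] ≠ W.headI := by
  obtain ⟨x, W, rfl⟩ :=
    List.exists_cons_of_ne_nil (List.ne_nil_of_length_pos (Nat.zero_lt_of_lt hjW))
  obtain ⟨j, rfl⟩ : ∃ j', j = j' + 1 := ⟨j - 1, by omega⟩
  intro h
  rw [List.getElem_cons_succ, List.headI_cons] at h
  exact (List.nodup_cons.1 hW).1 (h ▸ List.getElem_mem _)

theorem exists_eq_comp_of_adjR (h : adjR Δ D 0 W W') :
    ∃ c, 1 ≤ c ∧ c ≤ Δ + 1 ∧ c ≠ W.headI ∧ W' = comp c W := by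
  obtain ⟨⟨hlen, hnd, -⟩, ⟨-, -, hbd'⟩, ⟨j, hj, hjD, rfl⟩ | ⟨y, hy, rfl⟩⟩ := h
  · have hjW : j < W.length := hlen ▸ hjD
    rw [List.getD_eq_getElem _ _ hjW] at hbd' ⊢
    obtain ⟨c1, cΔ⟩ := hbd' _ List.mem_cons_self
    exact ⟨_, c1, cΔ, getElem_ne_headI hnd hj hjW,
      by rw [comp, if_pos (List.getElem_mem hjW), hnd.erase_getElem j hjW]⟩
  · obtain ⟨y1, yΔ⟩ := hbd' y List.mem_cons_self
    refine ⟨y, y1, yΔ, fun h => ?_, by rw [comp, if_neg hy]⟩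
    cases W with
    | nil => simp at h; omega
    | cons x W => exact hy (h ▸ List.mem_cons_self)

theorem greedyTime_le_of_isWalk {n : ℕ} {w : ℕ → List ℕ}
    (h : IsWalk (adjR Δ D 0) W (List.range' 1 D) n w) : greedyTime D W ≤ n := by
  induction n generalizing W w with
  | zero =>
    obtain ⟨rfl, hn, -⟩ := h
    exact greedyTime_le_of_isGreedyTime ⟨by simp [GreedyReaches, hn], Or.inl rfl⟩
  | succ n ih =>
    obtain ⟨rfl, hn, harc⟩ := h
    obtain ⟨c, hc, -, hcW, hw1⟩ := exists_eq_comp_of_adjR (harc 0 n.succ_pos)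
    have htail := ih (W := w 1) (w := fun i => w (i + 1))
      ⟨rfl, hn, fun i hi => harc (i + 1) (by omega)⟩
    calc greedyTime D (w 0) ≤ greedyTime D (comp c (w 0)) + 1 :=
          greedyTime_le_greedyTime_comp_add_one (harc 0 n.succ_pos).1.1 hc hcW
      _ = greedyTime D (w 1) + 1 := by rw [hw1]
      _ ≤ n + 1 := by omega

/-- The walk prepending `t, t-1, …, 1` to `W`. -/
def greedyWalk (W : List ℕ) (t s : ℕ) : List ℕ :=
  List.range' (t + 1 - s) s ++ residue W (List.range' (t + 1 - s) s)

@[simp] theorem greedyWalk_zero (W : List ℕ) (t : ℕ) : greedyWalk W t 0 = W := rfl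

theorem greedyWalk_succ (hlen : W.length = D) (htD : t ≤ D) (hst : s < t) :
    greedyWalk W t (s + 1) = comp (t - s) (greedyWalk W t s) := by
  set P := List.range' (t + 1 - s) s
  have hP : List.range' (t + 1 - (s + 1)) (s + 1) = (t - s) :: P := by
    rw [List.range'_succ, show t + 1 - (s + 1) = t - s by omega,
      show t - s + 1 = t + 1 - s by omega]
  have hcP : t - s ∉ P := by simp only [P, List.mem_range'_1]; omega
  have hR : residue W P ≠ [] := by
    rw [← List.length_pos_iff, length_residue, List.length_range']; omega
  rw [greedyWalk, greedyWalk, hP, comp_eq_cons_compTail, compTail_append_of_notMem hcP hR,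
    residue_cons, residue_compTail, List.cons_append]

theorem greedyWalk_self (h : GreedyReaches D W t) (htD : t ≤ D) :
    greedyWalk W t t = List.range' 1 D := by
  rw [greedyWalk, Nat.add_sub_cancel_left, ← greedy, h, Nat.add_comm t 1, List.range'_append_1,
    Nat.add_sub_cancel' htD]

theorem headI_greedyWalk (hs : 0 < s) (W : List ℕ) :
    (greedyWalk W t s).headI = t + 1 - s := by
  obtain ⟨s, rfl⟩ : ∃ s', s = s' + 1 := ⟨s - 1, by omega⟩
  rw [greedyWalk, List.range'_succ]
  rfl

theorem isWalk_greedyWalk (hΔ : D ≤ Δ) (hW : IsVtx Δ D W) (h : IsGreedyTime D W t)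
    (htD : t ≤ D) : IsWalk (adjR Δ D 0) W (List.range' 1 D) t (greedyWalk W t) := by
  refine ⟨greedyWalk_zero W t, greedyWalk_self h.1 htD, ?_⟩
  have harc : ∀ s < t, IsVtx Δ D (greedyWalk W t s) →
      adjR Δ D 0 (greedyWalk W t s) (greedyWalk W t (s + 1)) := by
    intro s hs hV
    rw [greedyWalk_succ hW.1 htD hs]
    refine adjR_comp hV (by omega) (by omega) (by omega) ?_
    rcases Nat.eq_zero_or_pos s with rfl | hs0
    · rw [greedyWalk_zero, Nat.sub_zero]
      exact (h.2.resolve_left (by omega)).symm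
    · rw [headI_greedyWalk hs0]
      omega
  have hvtx : ∀ s ≤ t, IsVtx Δ D (greedyWalk W t s) := by
    intro s hs
    induction s with
    | zero => rwa [greedyWalk_zero]
    | succ s ih => exact (harc s hs (ih (by omega))).2.1
  exact fun s hs => harc s hs (hvtx s hs.le)

theorem cpDist_range'_eq_greedyTime (hΔ : D ≤ Δ) (hW : IsVtx Δ D W) :
    cpDist (adjR Δ D 0) W (List.range' 1 D) = greedyTime D W := by
  have hwalk := isWalk_greedyWalk hΔ hW (isGreedyTime_greedyTime hW.1) (greedyTime_le hW.1)
  exact le_antisymm (Nat.sInf_le ⟨_, hwalk⟩)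
    (le_csInf ⟨_, _, hwalk⟩ fun _ ⟨_, hw⟩ => greedyTime_le_of_isWalk hw)

end Digraph

section Relabeling

variable {Δ D a : ℕ} {σ : Equiv.Perm ℕ} {u v W W' : List ℕ}

theorem comp_map {f : ℕ → ℕ} (hf : f.Injective) (c : ℕ) (L : List ℕ) :
    (comp c L).map f = comp (f c) (L.map f) := by
  rw [comp_eq_cons_compTail, comp_eq_cons_compTail, List.map_cons, compTail_map hf]

theorem isVtx_map (hσ : ∀ x, σ x ∈ Set.Icc 1 (Δ + 1) ↔ x ∈ Set.Icc 1 (Δ + 1))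
    (hW : IsVtx Δ D W) : IsVtx Δ D (W.map σ) :=
  ⟨by rw [List.length_map, hW.1], hW.2.1.map σ.injective,
    by simpa using fun x hx => (hσ x).2 (hW.2.2 x hx)⟩

theorem adjR_map (hσ : ∀ x, σ x ∈ Set.Icc 1 (Δ + 1) ↔ x ∈ Set.Icc 1 (Δ + 1))
    (h : adjR Δ D 0 W W') : adjR Δ D 0 (W.map σ) (W'.map σ) := by
  obtain ⟨c, hc, hcΔ, hcW, rfl⟩ := exists_eq_comp_of_adjR h
  have hD : 1 ≤ D := by
    have := h.2.1.1
    rw [comp_eq_cons_compTail, List.length_cons] at this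
    omega
  obtain ⟨x, W, rfl⟩ :=
    List.exists_cons_of_ne_nil (List.ne_nil_of_length_pos (by rw [h.1.1]; omega) : W ≠ [])
  rw [comp_map σ.injective]
  exact adjR_comp (isVtx_map hσ h.1) hD ((hσ c).2 ⟨hc, hcΔ⟩).1 ((hσ c).2 ⟨hc, hcΔ⟩).2
    fun h => hcW (σ.injective h)

theorem isWalk_map (hσ : ∀ x, σ x ∈ Set.Icc 1 (Δ + 1) ↔ x ∈ Set.Icc 1 (Δ + 1)) {n : ℕ}
    {w : ℕ → List ℕ} (h : IsWalk (adjR Δ D 0) u v n w) :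
    IsWalk (adjR Δ D 0) (u.map σ) (v.map σ) n (fun i => (w i).map σ) :=
  ⟨congrArg (List.map σ) h.1, congrArg (List.map σ) h.2.1, fun i hi => adjR_map hσ (h.2.2 i hi)⟩

theorem cpDist_map (hσ : ∀ x, σ x ∈ Set.Icc 1 (Δ + 1) ↔ x ∈ Set.Icc 1 (Δ + 1))
    (u v : List ℕ) : cpDist (adjR Δ D 0) (u.map σ) (v.map σ) = cpDist (adjR Δ D 0) u v := by
  have hσ' : ∀ x, σ.symm x ∈ Set.Icc 1 (Δ + 1) ↔ x ∈ Set.Icc 1 (Δ + 1) := fun x => by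
    rw [← hσ, Equiv.apply_symm_apply]
  unfold cpDist
  congr 1
  ext n
  constructor
  · rintro ⟨w, hw⟩
    refine ⟨fun i => (w i).map σ.symm, ?_⟩
    simpa only [List.map_map, Equiv.symm_comp_self, List.map_id] using isWalk_map hσ' hw
  · rintro ⟨w, hw⟩
    exact ⟨_, isWalk_map hσ hw⟩

theorem cpDist_eq_greedyTime_map (hΔ : D ≤ Δ) (hσ : ∀ y ∉ Set.Icc 1 a, σ y = y)
    (haΔ : a ≤ Δ + 1) (hu : IsVtx Δ D u) (hv : v.map σ = List.range' 1 D) :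
    cpDist (adjR Δ D 0) u v = greedyTime D (u.map σ) := by
  have hσΔ := apply_mem_Icc_iff_of_fixes hσ haΔ
  rw [← cpDist_map hσΔ, hv, cpDist_range'_eq_greedyTime hΔ (isVtx_map hσΔ hu)]

/-- The cycle `1 ↦ a ↦ m ↦ m - 1 ↦ ⋯ ↦ 2 ↦ 1`. -/
def labelCycle (a m : ℕ) (hm : 1 ≤ m) (hma : m < a) : Equiv.Perm ℕ where
  toFun x := if x = 1 then a else if x = a then m else if 2 ≤ x ∧ x ≤ m then x - 1 else x
  invFun y := if y = a then 1 else if y = m then a else if 1 ≤ y ∧ y < m then y + 1 else y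
  left_inv x := by dsimp only; split_ifs <;> omega
  right_inv y := by dsimp only; split_ifs <;> omega

section LabelCycle

variable {m : ℕ} {hm : 1 ≤ m} {hma : m < a}

theorem labelCycle_apply (x : ℕ) : labelCycle a m hm hma x =
    if x = 1 then a else if x = a then m else if 2 ≤ x ∧ x ≤ m then x - 1 else x := rfl

@[simp] theorem labelCycle_apply_one : labelCycle a m hm hma 1 = a := rfl

@[simp] theorem labelCycle_apply_self : labelCycle a m hm hma a = m := by
  rw [labelCycle_apply, if_neg (by omega), if_pos rfl]

theorem labelCycle_apply_of_notMem {x : ℕ} (hx : x ∉ Set.Icc 1 a) :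
    labelCycle a m hm hma x = x := by
  rw [Set.mem_Icc] at hx
  rw [labelCycle_apply]
  split_ifs <;> omega

theorem map_labelCycle_range'_two {n : ℕ} (hn : n ≤ m) (hna : n < m ∨ a = m + 1) :
    (List.range' 2 n).map (labelCycle a m hm hma) = List.range' 1 n := by
  rw [show List.range' 1 n = List.range' (2 - 1) n from rfl, ← List.map_sub_range' (by norm_num)]
  refine List.map_congr_left fun x hx => ?_
  have := List.mem_range'_1.1 hx
  rw [labelCycle_apply]
  split_ifs <;> omega

theorem map_labelCycle_range'_of_lt {b n : ℕ} (hab : a < b) :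
    (List.range' b n).map (labelCycle a m hm hma) = List.range' b n :=
  (List.map_congr_left fun x hx => labelCycle_apply_of_notMem
    (by have := List.mem_range'_1.1 hx; simp only [Set.mem_Icc]; omega)).trans (List.map_id _)

end LabelCycle

theorem map_labelCycle_Yi_of_le {i : ℕ} (hi : 2 ≤ i) (hiD : i ≤ D) :
    (Yi D i).map (labelCycle i (i - 1) (by omega) (by omega)) = List.range' 1 D := by
  rw [Yi, if_pos hiD, List.map_append, List.map_cons, labelCycle_apply_one,
    map_labelCycle_range'_two le_rfl (Or.inr (by omega)),
    map_labelCycle_range'_of_lt (by omega : i < i + 1), ← List.range'_succ]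
  have h := List.range'_append_1 (s := 1) (m := i - 1) (n := D - i + 1)
  rwa [show 1 + (i - 1) = i by omega, show i - 1 + (D - i + 1) = D by omega] at h

theorem map_labelCycle_Yi_of_lt {i : ℕ} (hD : 1 ≤ D) (hiD : D < i) :
    (Yi D i).map (labelCycle i D hD hiD) = List.range' 1 D := by
  rw [Yi, if_neg (by omega), List.map_append, List.map_singleton, labelCycle_apply_self,
    map_labelCycle_range'_two (by omega) (Or.inl (by omega))]
  obtain ⟨n, rfl⟩ : ∃ n, D = n + 1 := ⟨D - 1, by omega⟩
  rw [Nat.add_sub_cancel, List.range'_1_concat, Nat.add_comm 1 n]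

end Relabeling

section Relabelled

variable {D i : ℕ} {T : List ℕ}

theorem isGreedyTime_comp_labelCycle_iff (hi : 2 ≤ i) (hiD : i ≤ D) (hT : T.length + 1 = D)
    (t : ℕ) :
    IsGreedyTime D (comp (i - 1) ((1 :: T).map (labelCycle i (i - 1) (by omega) (by omega)))) t ↔
      (t + 2 = i ∧ GreedyReaches D (1 :: T) i) ∨ (i ≤ t ∧ GreedyReaches D (1 :: T) t) := by
  set σ := labelCycle i (i - 1) (by omega) (by omega)
  have hσ : ∀ y ∉ Set.Icc 1 i, σ y = y := fun y => labelCycle_apply_of_notMem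
  have hV : (1 :: T).map σ = i :: T.map σ := by simp [σ]
  have hpred : GreedyReaches D ((1 :: T).map σ) (i - 1) ↔ GreedyReaches D (1 :: T) i := by
    rw [hV, greedyReaches_cons_pred_iff (by omega) hiD (by simpa using hT), ← hV,
      greedyReaches_map_iff hσ le_rfl]
  rw [isGreedyTime_comp_iff (by omega) (by omega) (by simpa using hT), hpred]
  refine or_congr (and_congr_left' (by omega)) ⟨fun ⟨h, h'⟩ => ⟨by omega, ?_⟩,
    fun ⟨h, h'⟩ => ⟨by omega, ?_⟩⟩
  · exact (greedyReaches_map_iff hσ (by omega)).1 h'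
  · exact (greedyReaches_map_iff hσ h).2 h'

theorem greedyTime_comp_labelCycle (hi : 2 ≤ i) (hiD : i ≤ D) (hT : T.length + 1 = D) :
    greedyTime D (comp (i - 1) ((1 :: T).map (labelCycle i (i - 1) (by omega) (by omega)))) =
      if i < greedyTime D (1 :: T) then greedyTime D (1 :: T) else i - 2 := by
  have key := isGreedyTime_comp_labelCycle_iff hi hiD hT
  have hk := isGreedyTime_greedyTime (show (1 :: T).length = D from hT)
  have hkmin : ∀ t, 2 ≤ t → GreedyReaches D (1 :: T) t → greedyTime D (1 :: T) ≤ t :=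
    fun t ht h => greedyTime_le_of_isGreedyTime ⟨h, Or.inr (by simp; omega)⟩
  split_ifs with hik
  · refine greedyTime_eq_of_isGreedyTime ((key _).2 (Or.inr ⟨hik.le, hk.1⟩)) fun u hu h => ?_
    rcases (key u).1 h with ⟨-, h⟩ | ⟨hiu, h⟩
    · have := hkmin i hi h; omega
    · have := hkmin u (by omega) h; omega
  · refine greedyTime_eq_of_isGreedyTime ((key _).2 (Or.inl ⟨by omega, hk.1.mono (by omega)⟩))
      fun u hu h => ?_
    rcases (key u).1 h with ⟨h, -⟩ | ⟨h, -⟩ <;> omega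

end Relabelled

end CyclePrefix

open CyclePrefix

/-- for a vertex `X` with `x_1 = 1`, `Y = 12⋯D` and `d(X,Y) = k`,
the distances `d(X_i, Y_i)` with `X_i = i ∘ X` are: `k` if `1 < i < k`; `k - 2`
if `i = k`; `i - 2` if `k < i ≤ D`; and `D - 1` if `i > D`. -/
theorem dist_Xi_Yi (Δ D k : ℕ) (hΔ : D ≤ Δ)
    (X : List ℕ) (hX : IsVtx Δ D X) (hX1 : X.headI = 1)
    (hk : cpDist (adjR Δ D 0) X (List.range' 1 D) = k) :
    ∀ i, 2 ≤ i → i ≤ Δ + 1 →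
      (i < k → cpDist (adjR Δ D 0) (comp i X) (Yi D i) = k) ∧
      (i = k → cpDist (adjR Δ D 0) (comp i X) (Yi D i) = k - 2) ∧
      (k < i → i ≤ D → cpDist (adjR Δ D 0) (comp i X) (Yi D i) = i - 2) ∧
      (D < i → cpDist (adjR Δ D 0) (comp i X) (Yi D i) = D - 1) := by
  intro i hi hiΔ
  obtain ⟨T, rfl⟩ : ∃ T, X = 1 :: T := by
    cases X with
    | nil => simp at hX1
    | cons x T => exact ⟨T, by rw [← hX1]; rfl⟩
  have hT : T.length + 1 = D := hX.1
  have hXi := isVtx_comp hX (by omega) (by omega) hiΔ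
  rw [cpDist_range'_eq_greedyTime hΔ hX] at hk
  subst hk
  by_cases hiD : i ≤ D
  · have h := cpDist_eq_greedyTime_map hΔ (fun y => labelCycle_apply_of_notMem) hiΔ hXi
      (map_labelCycle_Yi_of_le hi hiD)
    rw [comp_map (Equiv.injective _), labelCycle_apply_self,
      greedyTime_comp_labelCycle hi hiD hT] at h
    refine ⟨fun h' => ?_, fun h' => ?_, fun h' _ => ?_, fun h' => absurd h' (by omega)⟩ <;>
      rw [h] <;> split_ifs <;> omega
  · have h := cpDist_eq_greedyTime_map hΔ (fun y => labelCycle_apply_of_notMem) hiΔ hXi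
      (map_labelCycle_Yi_of_lt (by omega) (by omega))
    rw [comp_map (Equiv.injective _), labelCycle_apply_self,
      greedyTime_comp_of_greedyReaches (by omega) le_rfl (by simp [hT])
        (greedyReaches_of_le (by simp [hT]) le_rfl)] at h
    have hkD := greedyTime_le hX.1
    exact ⟨by omega, by omega, by omega, fun _ => h⟩
end
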